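/- arXiv:2409.15057 — 5 statements merged into one kernel-verified Lean document; each statement's English description precedes it below -/
import Mathlib

section
/- With the notation of the context, there exists n₀ such that for every n ≥ n₀ and every closed subinterval I ⊆ [0,2π] of length 2π/n, there is a point t ∈ I for which at most one tuple (α_1,…,α_{N_n}) ∈ 𝒜^{N_n} is t-feasible. -/
open Filter Set Real

noncomputable section

/-- The deterministic trigonometric polynomial `p_σ` of degree `(m n + 1) * N n`,
normalized by `n^{-1/2}`. -/
def ppoly (m N : ℕ → ℕ) (n : ℕ) (σ : ℕ → ℤ) (t : ℝ) : ℝ :=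
  (1 / Real.sqrt n) * ∑ k ∈ Finset.Icc 1 ((m n + 1) * N n), (σ k : ℝ) * Real.cos (k * t)

/-- The tuple `(α 1, …, α (N n))` is `t`-feasible: it has entries in `𝒜` and can be completed
to a full vector `σ ∈ 𝒜^{(m n + 1) N n}` with `σ ((m n + 1) j) = α j` and `|p_σ(t) - z| ≤ δ n`. -/
def Feasible (𝒜 : Finset ℤ) (z : ℝ) (m N : ℕ → ℕ) (δ : ℕ → ℝ) (n : ℕ) (t : ℝ)
    (α : ℕ → ℤ) : Prop :=
  (∀ j ∈ Finset.Icc 1 (N n), α j ∈ 𝒜) ∧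
  ∃ σ : ℕ → ℤ, (∀ k ∈ Finset.Icc 1 ((m n + 1) * N n), σ k ∈ 𝒜) ∧
    (∀ j ∈ Finset.Icc 1 (N n), σ ((m n + 1) * j) = α j) ∧
    |ppoly m N n σ t - z| ≤ δ n


lemma pow_self_le_fact (M : ℕ) : (M:ℝ)^M ≤ 4^M * M.factorial := by
  induction M with
  | zero => simp
  | succ M IH =>
    rcases Nat.eq_zero_or_pos M with h | h
    · subst h; norm_num
    have hM : (0:ℝ) < M := by exact_mod_cast h
    have h1 : ((M:ℝ)+1)^M ≤ 4 * (M:ℝ)^M := by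
      have : ((M:ℝ)+1)^M = (M:ℝ)^M * (1 + 1/M)^M := by
        rw [← mul_pow]
        congr 1
        field_simp
      rw [this]
      have h2 : (1 + 1/(M:ℝ))^M ≤ Real.exp 1 := by
        have h3 : (1 + 1/(M:ℝ)) ≤ Real.exp (1/M) := by
          have := Real.add_one_le_exp (1/(M:ℝ)); linarith
        calc (1 + 1/(M:ℝ))^M ≤ (Real.exp (1/M))^M := by
              apply pow_le_pow_left₀ (by positivity) h3
          _ = Real.exp 1 := by
              rw [← Real.exp_nat_mul]; congr 1; field_simp
      have h4 : Real.exp 1 ≤ 4 := by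
        have := Real.exp_one_lt_d9; linarith
      calc (M:ℝ)^M * (1 + 1/M)^M ≤ (M:ℝ)^M * 4 := by
            apply mul_le_mul_of_nonneg_left (le_trans h2 h4) (by positivity)
        _ = 4 * (M:ℝ)^M := by ring
    have hc : ((M:ℕ)+1 : ℝ) ^ (M+1) = ((M:ℝ)+1) * ((M:ℝ)+1)^M := by ring
    push_cast
    rw [hc, Nat.factorial_succ]
    push_cast
    calc ((M:ℝ)+1) * ((M:ℝ)+1)^M ≤ ((M:ℝ)+1) * (4 * (M:ℝ)^M) := by
          apply mul_le_mul_of_nonneg_left h1 (by positivity)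
      _ ≤ ((M:ℝ)+1) * (4 * (4^M * M.factorial)) := by
          apply mul_le_mul_of_nonneg_left (by
            apply mul_le_mul_of_nonneg_left IH (by norm_num)) (by positivity)
      _ = 4^(M+1) * (((M:ℝ)+1) * M.factorial) := by ring


lemma multiset_prod_lower (a : ℝ) (ha : 0 < a) :
    ∀ (n : ℕ) (d : Multiset ℝ), d.card = n →
      (∀ lam : ℕ, 1 ≤ lam → (d.filter (fun x => x ≤ lam * a)).card < lam) →
      a ^ n * n.factorial ≤ d.prod := by
  intro n
  induction n with
  | zero =>
    intro d hd _
    rw [Multiset.card_eq_zero] at hd; subst hd; simp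
  | succ n IH =>
    intro d hd hcount
    -- find an element > (n+1)*a
    have hx : ∃ x ∈ d, ¬ (x ≤ ((n+1:ℕ):ℝ) * a) := by
      by_contra hall
      push_neg at hall
      have : (d.filter (fun x => x ≤ ((n+1:ℕ):ℝ) * a)) = d := by
        rw [Multiset.filter_eq_self]; exact hall
      have h2 := hcount (n+1) (by omega)
      rw [this, hd] at h2
      omega
    obtain ⟨x, hxd, hxgt⟩ := hx
    push_neg at hxgt
    set d' := d.erase x with hd'
    have hcons : x ::ₘ d' = d := Multiset.cons_erase hxd
    have hcard' : d'.card = n := by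
      have := congrArg Multiset.card hcons
      simp at this; omega
    have hcount' : ∀ lam : ℕ, 1 ≤ lam →
        (d'.filter (fun x => x ≤ lam * a)).card < lam := by
      intro lam hlam
      have hle : d' ≤ d := Multiset.erase_le x d
      have h3 := Multiset.card_le_card (Multiset.filter_le_filter (fun x => x ≤ (lam:ℝ) * a) hle)
      exact lt_of_le_of_lt h3 (hcount lam hlam)
    have IH' := IH d' hcard' hcount'
    have hprod : d.prod = x * d'.prod := by rw [← hcons, Multiset.prod_cons]
    have hpos : (0:ℝ) < a ^ n * n.factorial := by positivity
    have hxpos : (0:ℝ) < ((n+1:ℕ):ℝ) * a := by positivity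
    rw [hprod]
    calc a ^ (n+1) * (n+1).factorial
        = (((n+1:ℕ):ℝ) * a) * (a ^ n * n.factorial) := by
          rw [Nat.factorial_succ]; push_cast; ring
      _ ≤ x * d'.prod := by
          apply mul_le_mul (le_of_lt hxgt) IH' (le_of_lt hpos)
          linarith


lemma cartan (a : ℝ) (ha : 0 < a) :
    ∀ (n : ℕ) (T : Multiset ℂ), Multiset.card T = n →
      ∃ L : List (ℂ × ℝ), (∀ q ∈ L, 0 ≤ q.2) ∧
        ((L.map Prod.snd).sum ≤ 2 * n * a) ∧
        ∀ z : ℂ, (∀ q ∈ L, q.2 < dist z q.1) →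
          ∀ lam : ℕ, 1 ≤ lam →
            Multiset.card (T.filter (fun w => dist z w ≤ lam * a)) < lam := by
  intro n
  induction n using Nat.strong_induction_on with
  | _ n IH =>
  intro T hT
  rcases Nat.eq_zero_or_pos n with hn | hn
  · subst hn
    refine ⟨[], by simp, by simp, ?_⟩
    intro z _ lam hlam
    have : Multiset.card (T.filter (fun w => dist z w ≤ lam * a)) ≤ Multiset.card T :=
      Multiset.card_le_card (Multiset.filter_le _ _)
    omega
  · classical
    set P : ℕ → Prop := fun lam => ∃ c : ℂ,
      lam ≤ Multiset.card (T.filter (fun w => dist c w ≤ lam * a)) with hP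
    obtain ⟨w₀, hw₀⟩ : ∃ w, w ∈ T := by
      apply Multiset.card_pos_iff_exists_mem.mp; omega
    have hP1 : P 1 := by
      refine ⟨w₀, ?_⟩
      have h0 : w₀ ∈ T.filter (fun w => dist w₀ w ≤ ((1:ℕ):ℝ) * a) := by
        rw [Multiset.mem_filter]
        refine ⟨hw₀, ?_⟩
        simp [dist_self]; positivity
      have := Multiset.card_pos_iff_exists_mem.mpr ⟨w₀, h0⟩
      omega
    set p := Nat.findGreatest P n with hpdef
    have hp1 : 1 ≤ p := Nat.le_findGreatest hn hP1
    have hpn : p ≤ n := Nat.findGreatest_le n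
    have hPp : P p := Nat.findGreatest_spec hn hP1
    obtain ⟨c, hc⟩ := hPp
    -- extract a submultiset R of the filter with card p
    set F := T.filter (fun w => dist c w ≤ (p:ℝ) * a) with hF
    have hpF : p ≤ Multiset.card F := hc
    set R : Multiset ℂ := ((F.toList.take p : List ℂ) : Multiset ℂ) with hR
    have hRF : R ≤ F := by
      rw [hR]
      have h1 : (F.toList.take p).Subperm F.toList := (List.take_sublist p F.toList).subperm
      have := Multiset.coe_le.mpr h1
      simpa using this
    have hRcard : Multiset.card R = p := by
      rw [hR]
      simp only [Multiset.coe_card, List.length_take, Multiset.length_toList]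
      omega
    have hRT : R ≤ T := le_trans hRF (Multiset.filter_le _ _)
    set T' := T - R with hT'
    have hT'card : Multiset.card T' = n - p := by
      rw [hT', Multiset.card_sub hRT, hRcard, hT]
    have hdec : n - p < n := by omega
    obtain ⟨L', hL'nn, hL'sum, hL'prop⟩ := IH (n - p) hdec T' hT'card
    refine ⟨(c, 2 * p * a) :: L', ?_, ?_, ?_⟩
    · intro q hq
      rcases List.mem_cons.mp hq with h | h
      · subst h; positivity
      · exact hL'nn q h
    · simp only [List.map_cons, List.sum_cons]
      have hcast : ((n - p : ℕ) : ℝ) = (n : ℝ) - p := by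
        have := Nat.cast_sub hpn (R := ℝ); exact this
      calc 2 * (p:ℝ) * a + (L'.map Prod.snd).sum
          ≤ 2 * (p:ℝ) * a + 2 * ((n-p:ℕ):ℝ) * a := by linarith [hL'sum]
        _ = 2 * n * a := by rw [hcast]; ring
    · intro z hz lam hlam
      have h1 : 2 * (p:ℝ) * a < dist z c := hz (c, 2 * p * a) List.mem_cons_self
      have h2 : ∀ q ∈ L', q.2 < dist z q.1 := fun q hq => hz q (List.mem_cons_of_mem _ hq)
      have hTsplit : T' + R = T := tsub_add_cancel_of_le hRT
      have hcount : Multiset.card (T.filter (fun w => dist z w ≤ (lam:ℝ) * a))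
          = Multiset.card (T'.filter (fun w => dist z w ≤ (lam:ℝ) * a))
            + Multiset.card (R.filter (fun w => dist z w ≤ (lam:ℝ) * a)) := by
        rw [← hTsplit, Multiset.filter_add, Multiset.card_add]
      by_cases hzero : Multiset.card (R.filter (fun w => dist z w ≤ (lam:ℝ) * a)) = 0
      · rw [hcount, hzero]
        simpa using hL'prop z h2 lam hlam
      · obtain ⟨w, hw⟩ : ∃ w, w ∈ R.filter (fun w => dist z w ≤ (lam:ℝ) * a) := by
          apply Multiset.card_pos_iff_exists_mem.mp; omega
        rw [Multiset.mem_filter] at hw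
        obtain ⟨hwR, hwz⟩ := hw
        by_cases hlp : lam ≤ p
        · exfalso
          have hwF : w ∈ F := Multiset.mem_of_le hRF hwR
          rw [hF, Multiset.mem_filter] at hwF
          have h3 : dist z c ≤ dist z w + dist w c := dist_triangle z w c
          have h4 : dist w c = dist c w := dist_comm w c
          have h5 : (lam:ℝ) * a ≤ (p:ℝ) * a := by
            apply mul_le_mul_of_nonneg_right _ (le_of_lt ha)
            exact_mod_cast hlp
          linarith [hwF.2]
        · -- p < lam : use maximality
          by_contra hcon
          push_neg at hcon
          have hlamn : lam ≤ n := by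
            have := Multiset.card_le_card
              (Multiset.filter_le (fun w => dist z w ≤ (lam:ℝ) * a) T)
            omega
          have hPlam : P lam := ⟨z, hcon⟩
          have := Nat.le_findGreatest hlamn hPlam
          omega


lemma chord_eq (s t : ℝ) :
    ‖(Complex.exp (s * Complex.I) - Complex.exp (t * Complex.I))‖
      = 2 * |Real.sin ((s - t)/2)| := by
  have h : Complex.exp ((s:ℂ) * Complex.I) - Complex.exp ((t:ℂ) * Complex.I)
      = Complex.exp ((((s+t)/2 : ℝ):ℂ) * Complex.I) *
        (Complex.exp ((((s-t)/2 : ℝ):ℂ) * Complex.I)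
          - Complex.exp ((-(((s-t)/2 : ℝ)):ℂ) * Complex.I)) := by
    rw [mul_sub, ← Complex.exp_add, ← Complex.exp_add]
    push_cast
    ring_nf
  rw [h, norm_mul, Complex.norm_exp_ofReal_mul_I, one_mul]
  have h2 : Complex.exp ((((s-t)/2 : ℝ):ℂ) * Complex.I)
      - Complex.exp ((-(((s-t)/2 : ℝ)):ℂ) * Complex.I)
      = 2 * Complex.sin (((s-t)/2 : ℝ)) * Complex.I := by
    rw [Complex.exp_mul_I, Complex.exp_mul_I, Complex.cos_neg, Complex.sin_neg]
    ring
  rw [h2]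
  rw [norm_mul, norm_mul, Complex.norm_I, mul_one, Complex.norm_two]
  rw [← Complex.ofReal_sin, Complex.norm_real, Real.norm_eq_abs]

lemma arc_lemma (c : ℂ) (r : ℝ) (u v : ℝ) (huv : v - u ≤ π) :
    ∃ t₀ : ℝ, ∀ t ∈ Set.Icc u v,
      dist (Complex.exp (t * Complex.I)) c ≤ r → |t - t₀| ≤ π * r := by
  by_cases hex : ∃ t₁ ∈ Set.Icc u v, dist (Complex.exp (t₁ * Complex.I)) c ≤ r
  · obtain ⟨t₁, ht₁, hd₁⟩ := hex
    refine ⟨t₁, fun t ht hd => ?_⟩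
    have hchord : dist (Complex.exp ((t:ℂ) * Complex.I)) (Complex.exp ((t₁:ℂ) * Complex.I))
        ≤ 2 * r := by
      calc dist (Complex.exp ((t:ℂ) * Complex.I)) (Complex.exp ((t₁:ℂ) * Complex.I))
          ≤ dist (Complex.exp ((t:ℂ) * Complex.I)) c
            + dist c (Complex.exp ((t₁:ℂ) * Complex.I)) := dist_triangle _ _ _
        _ ≤ r + r := by
            rw [dist_comm c]
            exact add_le_add hd hd₁
        _ = 2 * r := by ring
    rw [Complex.dist_eq, chord_eq] at hchord
    have hsin : |Real.sin ((t - t₁)/2)| ≤ r := by linarith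
    have htt : |t - t₁| ≤ π := by
      rw [abs_le]
      rcases ht with ⟨h1, h2⟩; rcases ht₁ with ⟨h3, h4⟩
      constructor <;> linarith
    have htt' := abs_le.mp htt
    have hpi := Real.pi_pos
    have hkey : 2/π * (|t - t₁|/2) ≤ |Real.sin ((t-t₁)/2)| := by
      have habs : |Real.sin ((t-t₁)/2)| = Real.sin (|t - t₁|/2) := by
        rcases le_or_gt t₁ t with h | h
        · rw [abs_of_nonneg (by linarith : (0:ℝ) ≤ t - t₁),
            abs_of_nonneg]
          apply Real.sin_nonneg_of_nonneg_of_le_pi <;> linarith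
        · have : (t - t₁)/2 = -((t₁ - t)/2) := by ring
          rw [this, Real.sin_neg, abs_neg, abs_of_neg (by linarith : t - t₁ < 0)]
          rw [abs_of_nonneg]
          · congr 1; ring
          · apply Real.sin_nonneg_of_nonneg_of_le_pi <;> linarith
      rw [habs]
      apply Real.mul_le_sin (by positivity)
      linarith
    have : 2/π * (|t - t₁|/2) ≤ r := le_trans hkey hsin
    calc |t - t₁| = π * (2/π * (|t - t₁|/2)) := by field_simp
      _ ≤ π * r := by apply mul_le_mul_of_nonneg_left this (le_of_lt hpi)
  · push_neg at hex
    exact ⟨u, fun t ht hd => absurd hd (not_le.mpr (hex t ht))⟩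


def Qp (τ : ℕ → ℤ) (D : ℕ) (t : ℝ) : ℝ :=
  ∑ k ∈ Finset.Icc 1 D, (τ k : ℝ) * Real.cos (k * t)

def Gp (τ : ℕ → ℤ) (D : ℕ) : Polynomial ℂ :=
  ∑ k ∈ Finset.Icc 1 D, Polynomial.C ((τ k : ℂ)) *
    (Polynomial.X ^ (D + k) + Polynomial.X ^ (D - k))

lemma Gp_eval_abs (τ : ℕ → ℤ) (D : ℕ) (t : ℝ) :
    ‖(Gp τ D).eval (Complex.exp (t * Complex.I))‖ = 2 * |Qp τ D t| := by
  have hterm : ∀ k ∈ Finset.Icc 1 D,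
      Polynomial.eval (Complex.exp (t * Complex.I))
        (Polynomial.C ((τ k : ℂ)) * (Polynomial.X ^ (D + k) + Polynomial.X ^ (D - k)))
      = Complex.exp ((D:ℂ) * t * Complex.I) * ((τ k : ℂ) * (2 * Complex.cos ((k:ℝ) * t))) := by
    intro k hk
    rw [Finset.mem_Icc] at hk
    have hkD : k ≤ D := hk.2
    simp only [Polynomial.eval_mul, Polynomial.eval_C, Polynomial.eval_add,
      Polynomial.eval_pow, Polynomial.eval_X]
    have e1 : Complex.exp ((t:ℂ) * Complex.I) ^ (D + k)
        = Complex.exp ((D:ℂ) * t * Complex.I) * Complex.exp (((k:ℝ):ℂ) * t * Complex.I) := by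
      rw [← Complex.exp_nat_mul, ← Complex.exp_add]
      push_cast
      ring_nf
    have e2 : Complex.exp ((t:ℂ) * Complex.I) ^ (D - k)
        = Complex.exp ((D:ℂ) * t * Complex.I) * Complex.exp (-(((k:ℝ):ℂ) * t * Complex.I)) := by
      rw [← Complex.exp_nat_mul, ← Complex.exp_add]
      congr 1
      have : ((D - k : ℕ) : ℂ) = (D : ℂ) - k := by
        push_cast [Nat.cast_sub hkD]; ring
      rw [this]
      push_cast
      ring
    rw [e1, e2]
    have e3 : Complex.exp (((k:ℝ):ℂ) * t * Complex.I) + Complex.exp (-(((k:ℝ):ℂ) * t * Complex.I))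
        = 2 * Complex.cos ((k:ℝ) * t) := by
      have ha : (((k:ℝ):ℂ) * t) * Complex.I = ((k:ℝ) * t : ℂ) * Complex.I := by push_cast; ring
      have hb : -((((k:ℝ):ℂ) * t) * Complex.I) = (-((k:ℝ) * t) : ℂ) * Complex.I := by push_cast; ring
      rw [ha, hb, Complex.exp_mul_I, Complex.exp_mul_I, Complex.cos_neg, Complex.sin_neg]
      push_cast
      ring
    rw [mul_add, ← e3]
    ring
  have heval : Polynomial.eval (Complex.exp (t * Complex.I)) (Gp τ D)
      = Complex.exp ((D:ℂ) * t * Complex.I) * (2 * ((Qp τ D t : ℝ) : ℂ)) := by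
    rw [Gp, Polynomial.eval_finset_sum]
    rw [Finset.sum_congr rfl hterm, ← Finset.mul_sum]
    congr 1
    rw [Qp]
    push_cast
    rw [Finset.mul_sum]
    apply Finset.sum_congr rfl
    intro k hk
    ring
  have hD : (D:ℂ) * t * Complex.I = ((D * t : ℝ) : ℂ) * Complex.I := by push_cast; ring
  rw [heval, norm_mul, hD, Complex.norm_exp_ofReal_mul_I, one_mul, norm_mul,
    Complex.norm_two, Complex.norm_real, Real.norm_eq_abs]

lemma Gp_coeff_high (τ : ℕ → ℤ) (D : ℕ) (j : ℕ) (hj : D < j) :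
    (Gp τ D).coeff j = if j - D ∈ Finset.Icc 1 D then ((τ (j - D) : ℂ)) else 0 := by
  rw [Gp, Polynomial.finset_sum_coeff]
  have hterm : ∀ k ∈ Finset.Icc 1 D,
      (Polynomial.C ((τ k : ℂ)) * (Polynomial.X ^ (D + k) + Polynomial.X ^ (D - k))).coeff j
      = if k = j - D then ((τ k : ℂ)) else 0 := by
    intro k hk
    rw [Finset.mem_Icc] at hk
    rw [Polynomial.coeff_C_mul, Polynomial.coeff_add, Polynomial.coeff_X_pow,
      Polynomial.coeff_X_pow]
    have h2 : ¬ (j = D - k) := by omega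
    rw [if_neg h2]
    by_cases h1 : k = j - D
    · have : j = D + k := by omega
      rw [if_pos this]
      rw [if_pos h1]
      ring
    · have : ¬ (j = D + k) := by omega
      rw [if_neg this, if_neg h1]
      ring
  rw [Finset.sum_congr rfl hterm]
  rw [Finset.sum_ite_eq' (Finset.Icc 1 D) (j - D) (fun k => ((τ k : ℂ)))]

lemma Gp_natDegree (τ : ℕ → ℤ) (D : ℕ) (k₀ : ℕ) (hk₀ : k₀ ∈ Finset.Icc 1 D)
    (hne : τ k₀ ≠ 0) (hmax : ∀ k ∈ Finset.Icc 1 D, k₀ < k → τ k = 0) :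
    (Gp τ D).natDegree = D + k₀ ∧ (Gp τ D).leadingCoeff = ((τ k₀ : ℂ)) := by
  rw [Finset.mem_Icc] at hk₀
  have hcoeff : (Gp τ D).coeff (D + k₀) = ((τ k₀ : ℂ)) := by
    rw [Gp_coeff_high τ D (D + k₀) (by omega)]
    have : D + k₀ - D = k₀ := by omega
    rw [this, if_pos (Finset.mem_Icc.mpr hk₀)]
  have hne' : (Gp τ D).coeff (D + k₀) ≠ 0 := by
    rw [hcoeff]
    exact_mod_cast hne
  have hle : (Gp τ D).natDegree ≤ D + k₀ := by
    rw [Polynomial.natDegree_le_iff_coeff_eq_zero]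
    intro j hj
    rw [Gp_coeff_high τ D j (by omega)]
    by_cases hmem : j - D ∈ Finset.Icc 1 D
    · rw [if_pos hmem]
      have := hmax (j - D) hmem (by omega)
      exact_mod_cast this
    · rw [if_neg hmem]
  have hge : D + k₀ ≤ (Gp τ D).natDegree := Polynomial.le_natDegree_of_ne_zero hne'
  have hdeg : (Gp τ D).natDegree = D + k₀ := le_antisymm hle hge
  refine ⟨hdeg, ?_⟩
  rw [Polynomial.leadingCoeff, hdeg, hcoeff]


lemma vol_list (l : List (ℝ × ℝ)) (hnn : ∀ q ∈ l, 0 ≤ q.2) :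
    MeasureTheory.volume (⋃ q ∈ l, Set.Icc (q.1 - q.2) (q.1 + q.2))
      ≤ ENNReal.ofReal (2 * (l.map Prod.snd).sum) := by
  induction l with
  | nil => simp
  | cons q l ih =>
    have hsplit : (⋃ r ∈ (q :: l), Set.Icc (r.1 - r.2) (r.1 + r.2))
        = Set.Icc (q.1 - q.2) (q.1 + q.2) ∪ ⋃ r ∈ l, Set.Icc (r.1 - r.2) (r.1 + r.2) := by
      simp [List.mem_cons, Set.iUnion_or, Set.iUnion_union_distrib]
    rw [hsplit]
    have h1 := MeasureTheory.measure_union_le (μ := MeasureTheory.volume)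
      (Set.Icc (q.1 - q.2) (q.1 + q.2)) (⋃ r ∈ l, Set.Icc (r.1 - r.2) (r.1 + r.2))
    have h2 : MeasureTheory.volume (Set.Icc (q.1 - q.2) (q.1 + q.2))
        = ENNReal.ofReal (2 * q.2) := by
      rw [Real.volume_Icc]; congr 1; ring
    have hq2 : 0 ≤ q.2 := hnn q List.mem_cons_self
    have hsums : 0 ≤ (l.map Prod.snd).sum := by
      apply List.sum_nonneg
      intro x hx
      rw [List.mem_map] at hx
      obtain ⟨r, hr, rfl⟩ := hx
      exact hnn r (List.mem_cons_of_mem q hr)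
    have ih' := ih (fun r hr => hnn r (List.mem_cons_of_mem q hr))
    calc MeasureTheory.volume (Set.Icc (q.1 - q.2) (q.1 + q.2) ∪ ⋃ r ∈ l, Set.Icc (r.1 - r.2) (r.1 + r.2))
        ≤ _ + _ := h1
      _ ≤ ENNReal.ofReal (2 * q.2) + ENNReal.ofReal (2 * (l.map Prod.snd).sum) := by
          rw [h2]; exact add_le_add le_rfl ih'
      _ = ENNReal.ofReal (2 * ((q :: l).map Prod.snd).sum) := by
          rw [← ENNReal.ofReal_add (by linarith) (by linarith)]
          congr 1
          simp only [List.map_cons, List.sum_cons]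
          ring

lemma list_sum_scale (c : ℝ) (l : List (ℂ × ℝ)) (g : ℂ × ℝ → ℝ) :
    (((l.map (fun q => (g q, c * q.2))).map Prod.snd).sum : ℝ)
      = c * ((l.map Prod.snd).sum) := by
  induction l with
  | nil => simp
  | cons q l ih => simp only [List.map_cons, List.sum_cons, ih]; ring

lemma key (τ : ℕ → ℤ) (D : ℕ) (hτ : ∃ k ∈ Finset.Icc 1 D, τ k ≠ 0)
    (ε : ℝ) (hε : 0 < ε) (hsmall : 4 * ε ≤ 1) (u v : ℝ) (huv : v - u ≤ π) :
    ∃ L : List (ℝ × ℝ), (∀ q ∈ L, 0 ≤ q.2) ∧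
      ((L.map Prod.snd).sum ≤ 8 * π * (4*ε) ^ ((1:ℝ)/(2*D))) ∧
      ∀ t ∈ Set.Icc u v, |Qp τ D t| ≤ ε →
        ∃ q ∈ L, t ∈ Set.Icc (q.1 - q.2) (q.1 + q.2) := by
  classical
  -- top nonzero index
  set S := (Finset.Icc 1 D).filter (fun k => τ k ≠ 0) with hS
  have hSne : S.Nonempty := by
    obtain ⟨k, hk, hkne⟩ := hτ
    exact ⟨k, Finset.mem_filter.mpr ⟨hk, hkne⟩⟩
  set k₀ := S.max' hSne with hk₀def
  have hk₀S : k₀ ∈ S := S.max'_mem hSne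
  have hk₀Icc : k₀ ∈ Finset.Icc 1 D := (Finset.mem_filter.mp hk₀S).1
  have hk₀ne : τ k₀ ≠ 0 := (Finset.mem_filter.mp hk₀S).2
  have hk₀max : ∀ k ∈ Finset.Icc 1 D, k₀ < k → τ k = 0 := by
    intro k hk hlt
    by_contra hne
    have : k ∈ S := Finset.mem_filter.mpr ⟨hk, hne⟩
    have := S.le_max' k this
    omega
  obtain ⟨hdeg, hlead⟩ := Gp_natDegree τ D k₀ hk₀Icc hk₀ne hk₀max
  set G := Gp τ D with hG
  set M := D + k₀ with hM
  have hk₀Icc' := Finset.mem_Icc.mp hk₀Icc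
  have hM1 : 1 ≤ M := by omega
  have hM2D : M ≤ 2 * D := by omega
  have hGne : G ≠ 0 := by
    intro h
    rw [h] at hlead
    simp [Polynomial.leadingCoeff_zero] at hlead
    exact hk₀ne (by exact_mod_cast hlead.symm)
  have hlead1 : 1 ≤ ‖G.leadingCoeff‖ := by
    rw [hlead]
    have : ‖((τ k₀ : ℂ))‖ = |(τ k₀ : ℝ)| := by
      rw [← Complex.ofReal_intCast, Complex.norm_real, Real.norm_eq_abs]
    rw [this]
    calc (1:ℝ) ≤ ((|τ k₀| : ℤ) : ℝ) := by exact_mod_cast Int.one_le_abs hk₀ne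
      _ = |((τ k₀ : ℤ) : ℝ)| := by push_cast; ring
  set T := G.roots with hT
  have hTcard : Multiset.card T = M := by
    rw [hT, Polynomial.splits_iff_card_roots.mp (IsAlgClosed.splits G), hdeg]
  -- factorization abs
  have hfact : ∀ z : ℂ, ‖G.eval z‖
      = ‖G.leadingCoeff‖ * ((T.map (fun w => dist z w)).prod) := by
    intro z
    conv_lhs => rw [(IsAlgClosed.splits G).eq_prod_roots]
    rw [Polynomial.eval_mul, Polynomial.eval_C, norm_mul]
    congr 1
    rw [Polynomial.eval_multiset_prod, show ∀ s : Multiset ℂ, ‖s.prod‖ = (s.map (‖·‖)).prod from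
      fun s => map_multiset_prod (normHom : ℂ →*₀ ℝ) s]
    congr 1
    rw [Multiset.map_map, Multiset.map_map]
    apply Multiset.map_congr rfl
    intro w _
    simp [Function.comp, Complex.dist_eq]
  -- Cartan setup
  set H := 4 * (4*ε) ^ ((1:ℝ)/M) with hH
  have h4ε : (0:ℝ) < 4 * ε := by linarith
  have hHpos : 0 < H := by
    rw [hH]; positivity
  set a := H / M with ha'
  have ha : 0 < a := by
    rw [ha']
    apply div_pos hHpos
    exact_mod_cast hM1
  obtain ⟨L0, hL0nn, hL0sum, hL0prop⟩ := cartan a ha M T hTcard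
  set L : List (ℝ × ℝ) := L0.map (fun q =>
    (Classical.choose (arc_lemma q.1 q.2 u v huv), π * q.2)) with hL
  have hπ := Real.pi_pos
  refine ⟨L, ?_, ?_, ?_⟩
  · intro q hq
    rw [hL, List.mem_map] at hq
    obtain ⟨q0, hq0, rfl⟩ := hq
    have := hL0nn q0 hq0
    positivity
  · have hsum : (L.map Prod.snd).sum = π * ((L0.map Prod.snd).sum) := by
      rw [hL]
      exact list_sum_scale π L0 _
    rw [hsum]
    have h1 : π * ((L0.map Prod.snd).sum) ≤ π * (2 * M * a) :=
      mul_le_mul_of_nonneg_left hL0sum (le_of_lt hπ)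
    have hM0 : (M:ℝ) ≠ 0 := by
      have : (0:ℝ) < (M:ℝ) := by exact_mod_cast hM1
      linarith
    have hD0 : (0:ℝ) < 2*(D:ℝ) := by
      have hD1 : 1 ≤ D := le_trans hk₀Icc'.1 hk₀Icc'.2
      have : (1:ℝ) ≤ (D:ℝ) := by exact_mod_cast hD1
      linarith
    have h2 : (2:ℝ) * M * a = 2 * H := by
      rw [ha']
      field_simp
    have h3 : (4*ε) ^ ((1:ℝ)/M) ≤ (4*ε) ^ ((1:ℝ)/(2*D)) := by
      apply Real.rpow_le_rpow_of_exponent_ge h4ε hsmall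
      rw [div_le_div_iff₀ hD0 (by exact_mod_cast hM1 : (0:ℝ) < (M:ℝ))]
      have hMr : (M:ℝ) ≤ 2*(D:ℝ) := by exact_mod_cast hM2D
      linarith
    calc π * ((L0.map Prod.snd).sum) ≤ π * (2 * H) := by rw [← h2]; exact h1
      _ = 8 * π * (4*ε) ^ ((1:ℝ)/M) := by rw [hH]; ring
      _ ≤ 8 * π * (4*ε) ^ ((1:ℝ)/(2*D)) := by
          apply mul_le_mul_of_nonneg_left h3 (by positivity)
  · intro t ht hQ
    by_contra hnc
    push_neg at hnc
    set z := Complex.exp ((t:ℂ) * Complex.I) with hz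
    -- z is outside all disks
    have houts : ∀ q ∈ L0, q.2 < dist z q.1 := by
      intro q hq
      by_contra hle
      push_neg at hle
      have hspec := Classical.choose_spec (arc_lemma q.1 q.2 u v huv) t ht hle
      have hmem : (Classical.choose (arc_lemma q.1 q.2 u v huv), π * q.2) ∈ L := by
        rw [hL, List.mem_map]; exact ⟨q, hq, rfl⟩
      have hno := hnc _ hmem
      rw [Set.mem_Icc] at hno
      push_neg at hno
      dsimp only at hno
      rcases abs_le.mp hspec with ⟨ha1, ha2⟩
      by_cases hcase : Classical.choose (arc_lemma q.1 q.2 u v huv) - π * q.2 ≤ t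
      · have := hno hcase; linarith
      · push_neg at hcase; linarith
    -- counts
    have hcounts : ∀ lam : ℕ, 1 ≤ lam →
        Multiset.card ((T.map (fun w => dist z w)).filter (fun x => x ≤ lam * a)) < lam := by
      intro lam hlam
      rw [Multiset.filter_map]
      rw [Multiset.card_map]
      exact hL0prop z houts lam hlam
    have hlower := multiset_prod_lower a ha M (T.map (fun w => dist z w))
      (by rw [Multiset.card_map]; exact hTcard) hcounts
    -- upper bound on product
    have hGz : ‖G.eval z‖ ≤ 2 * ε := by
      rw [hz, hG, Gp_eval_abs]
      linarith
    have hprodnn : (0:ℝ) ≤ (T.map (fun w => dist z w)).prod := by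
      apply Multiset.prod_nonneg
      intro x hx
      rw [Multiset.mem_map] at hx
      obtain ⟨w, _, rfl⟩ := hx
      exact dist_nonneg
    have hprodle : (T.map (fun w => dist z w)).prod ≤ 2 * ε := by
      have h1 : (T.map (fun w => dist z w)).prod
          ≤ ‖G.leadingCoeff‖ * (T.map (fun w => dist z w)).prod :=
        le_mul_of_one_le_left hprodnn hlead1
      rw [← hfact z] at h1
      linarith
    -- lower bound: a^M * M! ≥ 4ε
    have hMpos : (0:ℝ) < (M:ℝ) := by exact_mod_cast hM1
    have hq : (1:ℝ)/4^M ≤ (M.factorial : ℝ) / (M:ℝ)^M := by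
      rw [div_le_div_iff₀ (by positivity) (pow_pos hMpos M)]
      have := pow_self_le_fact M
      nlinarith
    have hHM : (0:ℝ) < H^M := pow_pos hHpos M
    have hstep : (H/4)^M ≤ a^M * M.factorial := by
      rw [ha', div_pow, div_pow]
      calc H^M / 4^M = H^M * (1/4^M) := by ring
        _ ≤ H^M * ((M.factorial : ℝ) / (M:ℝ)^M) := by
            apply mul_le_mul_of_nonneg_left hq (le_of_lt hHM)
        _ = H^M / (M:ℝ)^M * M.factorial := by ring
    have hH4 : (H/4 : ℝ)^M = 4*ε := by
      have h1 : H/4 = (4*ε)^((1:ℝ)/M) := by rw [hH]; ring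
      rw [h1, ← Real.rpow_natCast ((4*ε)^((1:ℝ)/M)) M, ← Real.rpow_mul (le_of_lt h4ε)]
      have h2 : (1:ℝ)/M * M = 1 := by field_simp
      rw [h2, Real.rpow_one]
    have := le_trans hstep hlower
    rw [hH4] at this
    linarith

set_option maxHeartbeats 1000000 in
theorem statement7 (𝒜 : Finset ℤ) (z : ℝ) (m N : ℕ → ℕ) (δ : ℕ → ℝ)
    (hm : ∀ n, 0 < m n) (hN : ∀ n, 0 < N n) (hmN : ∀ n, (m n + 1) * N n ≤ n)
    (hδ : ∀ n, 0 < δ n)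
    (hcond : Tendsto (fun n : ℕ =>
        (n : ℝ) * (Real.sqrt n * δ n) ^ ((1 : ℝ) / (2 * (m n + 1) * N n)) *
          (𝒜.card : ℝ) ^ (2 * (m n + 1) * N n)) atTop (nhds 0)) :
    ∃ n₀ : ℕ, ∀ n ≥ n₀, ∀ u : ℝ, 0 ≤ u → u + 2 * π / n ≤ 2 * π →
      ∃ t ∈ Set.Icc u (u + 2 * π / n),
        ∀ α α' : ℕ → ℤ, Feasible 𝒜 z m N δ n t α → Feasible 𝒜 z m N δ n t α' →
          ∀ j ∈ Finset.Icc 1 (N n), α j = α' j := by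
  classical
  have hπ := Real.pi_pos
  rcases Nat.lt_or_ge 𝒜.card 2 with hA | hA
  · -- trivial case : at most one element in 𝒜
    refine ⟨0, fun n _ u hu huv => ⟨u, ?_, ?_⟩⟩
    · refine Set.left_mem_Icc.mpr ?_
      have : (0:ℝ) ≤ 2 * π / n := by positivity
      linarith
    · intro α α' hα hα' j hj
      exact Finset.card_le_one.mp (by omega) _ (hα.1 j hj) _ (hα'.1 j hj)
  · -- main case
    have hev : ∀ᶠ n : ℕ in atTop, (n : ℝ) *
        (Real.sqrt n * δ n) ^ ((1 : ℝ) / (2 * (m n + 1) * N n)) *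
          (𝒜.card : ℝ) ^ (2 * (m n + 1) * N n) < 1/50 :=
      hcond.eventually_lt_const (by norm_num)
    obtain ⟨n₁, hn₁⟩ := eventually_atTop.mp hev
    refine ⟨max n₁ 2, fun n hn u hu huv => ?_⟩
    have hn2 : 2 ≤ n := le_trans (le_max_right _ _) hn
    have hnn₁ : n₁ ≤ n := le_trans (le_max_left _ _) hn
    obtain ⟨D, hD⟩ : ∃ D, D = (m n + 1) * N n := ⟨_, rfl⟩
    have hD2 : 2 ≤ D := by
      have h1 := hm n; have h2 := hN n
      rw [hD]
      calc 2 = 2 * 1 := rfl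
        _ ≤ (m n + 1) * N n := Nat.mul_le_mul (by omega) h2
    -- basic positivity
    have hnR : (0:ℝ) < n := by exact_mod_cast (by omega : 0 < n)
    have hsq : (0:ℝ) < Real.sqrt n := Real.sqrt_pos.mpr hnR
    have hδn := hδ n
    obtain ⟨y, hy⟩ : ∃ y : ℝ, y = Real.sqrt n * δ n := ⟨_, rfl⟩
    have hy0 : 0 < y := by rw [hy]; positivity
    obtain ⟨X, hX⟩ : ∃ X : ℝ, X = y ^ ((1:ℝ)/(2*(D:ℝ))) := ⟨_, rfl⟩
    have hX0 : 0 < X := by rw [hX]; exact Real.rpow_pos_of_pos hy0 _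
    -- rewrite the hcond bound
    have hcast : (1:ℝ) / (2 * ((m n : ℝ) + 1) * (N n : ℝ)) = (1:ℝ)/(2*(D:ℝ)) := by
      rw [hD]; push_cast; ring_nf
    have hAcard : (𝒜.card : ℝ) ^ (2 * (m n + 1) * N n) = (𝒜.card : ℝ) ^ (2*D) := by
      rw [hD]; ring_nf
    have hbound : (n:ℝ) * X * (𝒜.card : ℝ) ^ (2*D) < 1/50 := by
      have := hn₁ n hnn₁
      rw [hcast] at this
      rw [hAcard] at this
      rw [hX, hy]
      exact this
    have hA1 : (1:ℝ) ≤ (𝒜.card : ℝ) ^ (2*D) := by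
      apply one_le_pow₀
      have : (2:ℝ) ≤ (𝒜.card : ℝ) := by exact_mod_cast hA
      linarith
    have hX50 : X < 1/50 := by
      have hn2' : (2:ℝ) ≤ (n:ℝ) := by exact_mod_cast hn2
      have hprod1 : (1:ℝ) ≤ (n:ℝ) * (𝒜.card:ℝ)^(2*D) := by nlinarith
      have h1 : X * 1 ≤ X * ((n:ℝ) * (𝒜.card:ℝ)^(2*D)) :=
        mul_le_mul_of_nonneg_left hprod1 (le_of_lt hX0)
      nlinarith
    -- epsilon
    obtain ⟨ε, hε'⟩ : ∃ e : ℝ, e = 2 * y := ⟨_, rfl⟩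
    have hε : 0 < ε := by rw [hε']; positivity
    have hyX : y = X ^ (2*D) := by
      rw [hX, ← Real.rpow_natCast (y ^ ((1:ℝ)/(2*(D:ℝ)))) (2*D), ← Real.rpow_mul (le_of_lt hy0)]
      have h2D : ((2*D : ℕ):ℝ) = 2*(D:ℝ) := by push_cast; ring
      rw [h2D]
      have : (1:ℝ)/(2*(D:ℝ)) * (2*(D:ℝ)) = 1 := by
        have : (0:ℝ) < (D:ℝ) := by exact_mod_cast (by omega : 0 < D)
        field_simp
      rw [this, Real.rpow_one]
    have hX1 : X ≤ 1 := by linarith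
    have hy_small : y ≤ X^2 := by
      rw [hyX]
      exact pow_le_pow_of_le_one (le_of_lt hX0) hX1 (by omega)
    have hsmall : 4 * ε ≤ 1 := by
      have : X^2 ≤ (1/50)^2 := by
        apply pow_le_pow_left₀ (le_of_lt hX0) (le_of_lt hX50)
      nlinarith
    -- interval length
    have hlen : (u + 2*π/n) - u ≤ π := by
      have h1 : 2*π/(n:ℝ) ≤ 2*π/2 := by
        apply div_le_div_of_nonneg_left (by positivity) (by norm_num)
        exact_mod_cast hn2
      linarith
    -- the finite set of truncated coefficient functions
    obtain ⟨Sf, hSf⟩ : ∃ Sf : Finset (ℕ → ℤ), Sf = ((Finset.Icc 1 D).pi (fun _ => 𝒜)).image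
      (fun f k => if h : k ∈ Finset.Icc 1 D then f k h else 0) := ⟨_, rfl⟩
    obtain ⟨badpairs, hbp⟩ : ∃ bp : Finset ((ℕ → ℤ) × (ℕ → ℤ)), bp = (Sf ×ˢ Sf).filter
      (fun p => ∃ j ∈ Finset.Icc 1 (N n), p.1 ((m n + 1) * j) ≠ p.2 ((m n + 1) * j))
      := ⟨_, rfl⟩
    have hSfcard : Sf.card ≤ 𝒜.card ^ D := by
      rw [hSf]
      apply le_trans Finset.card_image_le
      rw [Finset.card_pi]
      rw [Finset.prod_const]
      rw [Nat.card_Icc]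
      norm_num
    have hbpcard : badpairs.card ≤ 𝒜.card ^ (2*D) := by
      rw [hbp]
      apply le_trans (Finset.card_filter_le _ _)
      rw [Finset.card_product]
      calc Sf.card * Sf.card ≤ 𝒜.card ^ D * 𝒜.card ^ D := Nat.mul_le_mul hSfcard hSfcard
        _ = 𝒜.card ^ (2*D) := by rw [← pow_add]; congr 1; omega
    -- per-pair covering lists
    have hkeyall : ∀ p : (ℕ → ℤ) × (ℕ → ℤ), ∃ L : List (ℝ × ℝ),
        (∀ q ∈ L, 0 ≤ q.2) ∧ (p ∈ badpairs →
          ((L.map Prod.snd).sum ≤ 8 * π * (4*ε) ^ ((1:ℝ)/(2*(D:ℝ)))) ∧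
          ∀ t ∈ Set.Icc u (u + 2*π/n), |Qp (fun k => p.1 k - p.2 k) D t| ≤ ε →
            ∃ q ∈ L, t ∈ Set.Icc (q.1 - q.2) (q.1 + q.2)) := by
      intro p
      by_cases hp : p ∈ badpairs
      · have hτ : ∃ k ∈ Finset.Icc 1 D, (fun k => p.1 k - p.2 k) k ≠ 0 := by
          rw [hbp, Finset.mem_filter] at hp
          obtain ⟨_, j, hj, hne⟩ := hp
          rw [Finset.mem_Icc] at hj
          refine ⟨(m n + 1) * j, Finset.mem_Icc.mpr ⟨?_, ?_⟩, ?_⟩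
          · calc 1 = 1 * 1 := rfl
              _ ≤ (m n + 1) * j := Nat.mul_le_mul (by omega) hj.1
          · rw [hD]; exact Nat.mul_le_mul_left _ hj.2
          · simpa [sub_eq_zero] using hne
        obtain ⟨L, h1, h2, h3⟩ := key (fun k => p.1 k - p.2 k) D hτ ε hε hsmall
          u (u + 2*π/n) hlen
        exact ⟨L, h1, fun _ => ⟨h2, h3⟩⟩
      · exact ⟨[], by simp, fun h => absurd h hp⟩
    choose Lf hLnn hLrest using hkeyall
    -- the bad set
    set B : Set ℝ := ⋃ p ∈ badpairs, ⋃ q ∈ Lf p, Set.Icc (q.1 - q.2) (q.1 + q.2) with hB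
    -- measure bound
    have hmeas : MeasureTheory.volume B
        ≤ ENNReal.ofReal ((badpairs.card : ℝ) * (16 * π * (4*ε) ^ ((1:ℝ)/(2*(D:ℝ))))) := by
      rw [hB]
      apply le_trans (MeasureTheory.measure_biUnion_finset_le _ _)
      have hstep : ∀ p ∈ badpairs, MeasureTheory.volume (⋃ q ∈ Lf p, Set.Icc (q.1 - q.2) (q.1 + q.2))
          ≤ ENNReal.ofReal (16 * π * (4*ε) ^ ((1:ℝ)/(2*(D:ℝ)))) := by
        intro p hp
        apply le_trans (vol_list (Lf p) (hLnn p))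
        apply ENNReal.ofReal_le_ofReal
        have := (hLrest p hp).1
        linarith
      calc ∑ p ∈ badpairs, MeasureTheory.volume (⋃ q ∈ Lf p, Set.Icc (q.1 - q.2) (q.1 + q.2))
          ≤ ∑ _p ∈ badpairs, ENNReal.ofReal (16 * π * (4*ε) ^ ((1:ℝ)/(2*(D:ℝ)))) :=
            Finset.sum_le_sum hstep
        _ = (badpairs.card : ℕ) • ENNReal.ofReal (16 * π * (4*ε) ^ ((1:ℝ)/(2*(D:ℝ)))) := by
            rw [Finset.sum_const]
        _ = ENNReal.ofReal ((badpairs.card : ℝ) * (16 * π * (4*ε) ^ ((1:ℝ)/(2*(D:ℝ))))) := by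
            rw [nsmul_eq_mul, ← ENNReal.ofReal_natCast, ← ENNReal.ofReal_mul (Nat.cast_nonneg _)]
    -- numeric bound : total < 2π/n
    have hnum : (badpairs.card : ℝ) * (16 * π * (4*ε) ^ ((1:ℝ)/(2*(D:ℝ)))) < 2*π/n := by
      have hbc : (badpairs.card : ℝ) ≤ (𝒜.card : ℝ) ^ (2*D) := by exact_mod_cast hbpcard
      have h4e : (4*ε : ℝ) = 8 * y := by rw [hε']; ring
      have hexp : (4*ε : ℝ) ^ ((1:ℝ)/(2*(D:ℝ))) ≤ 3 * X := by
        rw [h4e]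
        have h8 : (8*y) ^ ((1:ℝ)/(2*(D:ℝ))) = 8 ^ ((1:ℝ)/(2*(D:ℝ))) * X := by
          rw [hX, ← Real.mul_rpow (by norm_num) (le_of_lt hy0)]
        rw [h8]
        have h83 : (8:ℝ) ^ ((1:ℝ)/(2*(D:ℝ))) ≤ 3 := by
          have hD4 : (4:ℝ) ≤ 2*(D:ℝ) := by
            have : (2:ℝ) ≤ (D:ℝ) := by exact_mod_cast hD2
            linarith
          have h1 : (8:ℝ) ^ ((1:ℝ)/(2*(D:ℝ))) ≤ 8 ^ ((1:ℝ)/2) := by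
            apply Real.rpow_le_rpow_of_exponent_le (by norm_num)
            rw [div_le_div_iff₀ (by linarith) (by norm_num)]
            linarith
          have h2 : (8:ℝ) ^ ((1:ℝ)/2) ≤ 3 := by
            rw [← Real.sqrt_eq_rpow]
            rw [show (3:ℝ) = Real.sqrt 9 by
              rw [show (9:ℝ) = 3^2 by norm_num, Real.sqrt_sq (by norm_num)]]
            exact Real.sqrt_le_sqrt (by norm_num)
          linarith
        exact mul_le_mul_of_nonneg_right h83 (le_of_lt hX0)
      have hXnn : 0 ≤ (4*ε : ℝ) ^ ((1:ℝ)/(2*(D:ℝ))) := by positivity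
      calc (badpairs.card : ℝ) * (16 * π * (4*ε) ^ ((1:ℝ)/(2*(D:ℝ))))
          ≤ (𝒜.card : ℝ) ^ (2*D) * (16 * π * (3 * X)) := by
            apply mul_le_mul hbc _ (by positivity) (pow_nonneg (Nat.cast_nonneg _) _)
            apply mul_le_mul_of_nonneg_left hexp (by positivity)
        _ = 48 * π * ((𝒜.card : ℝ) ^ (2*D) * X) := by ring
        _ < 2*π/n := by
            have hb : (n:ℝ) * X * (𝒜.card:ℝ)^(2*D) < 1/50 := hbound
            rw [lt_div_iff₀ hnR]
            have h2 : 48*π*((𝒜.card:ℝ)^(2*D)*X)*n = 48*π*((n:ℝ)*X*(𝒜.card:ℝ)^(2*D)) := by ring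
            rw [h2]
            nlinarith [mul_lt_mul_of_pos_left hb (by positivity : (0:ℝ) < 48*π)]
    -- find a good point t
    have hIccvol : MeasureTheory.volume (Set.Icc u (u + 2*π/n)) = ENNReal.ofReal (2*π/n) := by
      rw [Real.volume_Icc]; congr 1; ring
    have hnsub : ¬ (Set.Icc u (u + 2*π/n) ⊆ B) := by
      intro hsub
      have h1 := MeasureTheory.measure_mono (μ := MeasureTheory.volume) hsub
      rw [hIccvol] at h1
      have h2 := le_trans h1 hmeas
      rw [ENNReal.ofReal_le_ofReal_iff (mul_nonneg (Nat.cast_nonneg _) (by positivity))] at h2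
      linarith
    obtain ⟨t, ht, htB⟩ := Set.not_subset.mp hnsub
    refine ⟨t, ht, ?_⟩
    intro α α' hα hα' j hj
    by_contra hne
    obtain ⟨hαmem, σ, hσmem, hσα, hσp⟩ := hα
    obtain ⟨hα'mem, σ', hσ'mem, hσ'α, hσ'p⟩ := hα'
    have hgSf : ∀ τ : ℕ → ℤ, (∀ k ∈ Finset.Icc 1 ((m n + 1) * N n), τ k ∈ 𝒜) →
        (fun k => if k ∈ Finset.Icc 1 D then τ k else 0) ∈ Sf := by
      intro τ hτm
      rw [hSf, Finset.mem_image]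
      refine ⟨fun a _ => τ a, Finset.mem_pi.mpr (fun a ha => hτm a (by rwa [← hD])), ?_⟩
      funext k
      by_cases h : k ∈ Finset.Icc 1 D
      · rw [dif_pos h, if_pos h]
      · rw [dif_neg h, if_neg h]
    have hjIcc : (m n + 1) * j ∈ Finset.Icc 1 D := by
      rw [Finset.mem_Icc] at hj ⊢
      constructor
      · calc 1 = 1 * 1 := rfl
          _ ≤ (m n + 1) * j := Nat.mul_le_mul (by omega) hj.1
      · rw [hD]; exact Nat.mul_le_mul_left _ hj.2
    have hpbad : ((fun k => if k ∈ Finset.Icc 1 D then σ k else 0,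
        fun k => if k ∈ Finset.Icc 1 D then σ' k else 0) :
          (ℕ → ℤ) × (ℕ → ℤ)) ∈ badpairs := by
      rw [hbp, Finset.mem_filter]
      constructor
      · rw [Finset.mem_product]
        exact ⟨hgSf σ hσmem, hgSf σ' hσ'mem⟩
      · refine ⟨j, hj, ?_⟩
        simp only [if_pos hjIcc]
        rw [hσα j hj, hσ'α j hj]
        exact hne
    -- the Q value is small at t
    have hQcalc : Qp (fun k => (if k ∈ Finset.Icc 1 D then σ k else 0)
          - (if k ∈ Finset.Icc 1 D then σ' k else 0)) D t
        = Real.sqrt n * (ppoly m N n σ t - ppoly m N n σ' t) := by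
      rw [Qp]
      have hcong : ∀ k ∈ Finset.Icc 1 D,
          ((((if k ∈ Finset.Icc 1 D then σ k else 0)
            - (if k ∈ Finset.Icc 1 D then σ' k else 0) : ℤ)):ℝ) * Real.cos (k*t)
          = ((σ k:ℝ)) * Real.cos (k*t) - ((σ' k:ℝ)) * Real.cos (k*t) := by
        intro k hk
        rw [if_pos hk, if_pos hk]
        push_cast
        ring
      rw [Finset.sum_congr rfl hcong, Finset.sum_sub_distrib]
      rw [ppoly, ppoly, ← hD]
      have hs : Real.sqrt n ≠ 0 := ne_of_gt hsq
      field_simp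
      simp only [mul_comm t]
    have hQle : |Qp (fun k => (if k ∈ Finset.Icc 1 D then σ k else 0)
          - (if k ∈ Finset.Icc 1 D then σ' k else 0)) D t| ≤ ε := by
      rw [hQcalc, abs_mul, abs_of_nonneg (Real.sqrt_nonneg _)]
      have htri : |ppoly m N n σ t - ppoly m N n σ' t| ≤ 2 * δ n := by
        calc |ppoly m N n σ t - ppoly m N n σ' t|
            ≤ |ppoly m N n σ t - z| + |z - ppoly m N n σ' t| := abs_sub_le _ _ _
          _ ≤ δ n + δ n := by
              rw [abs_sub_comm z]
              exact add_le_add hσp hσ'p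
          _ = 2 * δ n := by ring
      calc Real.sqrt n * |ppoly m N n σ t - ppoly m N n σ' t|
          ≤ Real.sqrt n * (2 * δ n) := by
            apply mul_le_mul_of_nonneg_left htri (Real.sqrt_nonneg _)
        _ = ε := by rw [hε', hy]; ring
    obtain ⟨q, hqL, hqt⟩ := (hLrest _ hpbad).2 t ht hQle
    apply htB
    rw [hB]
    exact Set.mem_biUnion hpbad (Set.mem_biUnion hqL hqt)
end
end

section
/- For every η > 0 and K > 0 there exist constants δ₀ > 0 and κ ∈ [0,1) such that: whenever a and b are independent real random variables with E[a] = E[b] = 0, E[a²] = E[b²] = 1, E[|a|^{2+η}] ≤ K and E[|b|^{2+η}] ≤ K, one has ℙ(|a − b| < δ₀) ≤ κ. -/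
open MeasureTheory ProbabilityTheory

set_option maxHeartbeats 2000000 in
theorem statement8 (η K : ℝ) (hη : 0 < η) (hK : 0 < K) :
    ∃ δ₀ κ : ℝ, 0 < δ₀ ∧ 0 ≤ κ ∧ κ < 1 ∧
      ∀ (Ω : Type) [MeasurableSpace Ω] (P : Measure Ω), IsProbabilityMeasure P →
        ∀ a b : Ω → ℝ, Measurable a → Measurable b →
          ProbabilityTheory.IndepFun a b P →
          (∫ ω, a ω ∂P) = 0 → (∫ ω, b ω ∂P) = 0 →
          (∫ ω, (a ω) ^ 2 ∂P) = 1 → (∫ ω, (b ω) ^ 2 ∂P) = 1 →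
          MeasureTheory.MemLp a (ENNReal.ofReal (2 + η)) P →
          MeasureTheory.MemLp b (ENNReal.ofReal (2 + η)) P →
          (∫ ω, |a ω| ^ (2 + η) ∂P) ≤ K → (∫ ω, |b ω| ^ (2 + η) ∂P) ≤ K →
          P {ω | |a ω - b ω| < δ₀} ≤ ENNReal.ofReal κ := by
  set p : ℝ := 2 + η with hpdef
  have hp0 : 0 < p := by positivity
  set M : ℝ := 2 ^ p * (2 * K) with hMdef
  have hM0 : 0 < M := by
    have : (0:ℝ) < 2 ^ p := Real.rpow_pos_of_pos (by norm_num) _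
    positivity
  obtain ⟨T, hT1, hTeta⟩ : ∃ T : ℝ, 1 ≤ T ∧ 2 * M ≤ T ^ η := by
    have hmax1 : (1:ℝ) ≤ max 1 (2 * M) := le_max_left _ _
    refine ⟨(max 1 (2 * M)) ^ (1 / η), Real.one_le_rpow hmax1 (by positivity), ?_⟩
    rw [← Real.rpow_mul (by linarith), one_div_mul_cancel hη.ne', Real.rpow_one]
    exact le_max_right _ _
  have hT0 : (0:ℝ) < T := lt_of_lt_of_le one_pos hT1
  have hTeta0 : (0:ℝ) < T ^ η := Real.rpow_pos_of_pos hT0 _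
  have hT2 : (1:ℝ) ≤ T ^ 2 := one_le_pow₀ hT1
  have hfrac : 1 / (2 * T ^ 2) ≤ 1 / 2 := by
    apply one_div_le_one_div_of_le (by norm_num)
    linarith
  have hfrac0 : 0 < 1 / (2 * T ^ 2) := by positivity
  refine ⟨1, 1 - 1 / (2 * T ^ 2), one_pos, by linarith, by linarith, ?_⟩
  intro Ω _ P hProb a b hma hmb hindep hEa hEb hEa2 hEb2 hLa hLb hKa hKb
  -- basic setup
  set X : Ω → ℝ := fun ω => a ω - b ω with hXdef
  have hmX : Measurable X := hma.sub hmb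
  have hpe : (ENNReal.ofReal p).toReal = p := ENNReal.toReal_ofReal hp0.le
  have hpne0 : ENNReal.ofReal p ≠ 0 := by
    simp [ENNReal.ofReal_eq_zero, not_le, hp0]
  have hpnetop : ENNReal.ofReal p ≠ ⊤ := ENNReal.ofReal_ne_top
  have h2lep : (2 : ENNReal) ≤ ENNReal.ofReal p := by
    rw [show (2:ENNReal) = ENNReal.ofReal 2 by simp]
    exact ENNReal.ofReal_le_ofReal (by linarith)
  have h1lep : (1 : ENNReal) ≤ ENNReal.ofReal p := le_trans (by norm_num) h2lep
  -- integrability facts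
  have hLX : MemLp X (ENNReal.ofReal p) P := hLa.sub hLb
  have ha2 : Integrable (fun ω => a ω ^ 2) P :=
    (hLa.mono_exponent h2lep).integrable_sq
  have hb2 : Integrable (fun ω => b ω ^ 2) P :=
    (hLb.mono_exponent h2lep).integrable_sq
  have hX2 : Integrable (fun ω => X ω ^ 2) P :=
    (hLX.mono_exponent h2lep).integrable_sq
  have haInt : Integrable a P := hLa.integrable h1lep
  have hbInt : Integrable b P := hLb.integrable h1lep
  have hab : Integrable (fun ω => a ω * b ω) P := hindep.integrable_mul haInt hbInt
  have haP : Integrable (fun ω => |a ω| ^ p) P := by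
    have := hLa.integrable_norm_rpow hpne0 hpnetop
    simpa [hpe, Real.norm_eq_abs] using this
  have hbP : Integrable (fun ω => |b ω| ^ p) P := by
    have := hLb.integrable_norm_rpow hpne0 hpnetop
    simpa [hpe, Real.norm_eq_abs] using this
  have hXP : Integrable (fun ω => |X ω| ^ p) P := by
    have := hLX.integrable_norm_rpow hpne0 hpnetop
    simpa [hpe, Real.norm_eq_abs] using this
  -- second moment of X is 2
  have hEab : (∫ ω, a ω * b ω ∂P) = 0 := by
    rw [hindep.integral_fun_mul_eq_mul_integral haInt.aestronglyMeasurable hbInt.aestronglyMeasurable, hEa, hEb]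
    ring
  have hab2 : Integrable (fun ω => 2 * (a ω * b ω)) P := hab.const_mul 2
  have hsub : Integrable (fun ω => a ω ^ 2 - 2 * (a ω * b ω)) P := ha2.sub hab2
  have hEX2 : (∫ ω, X ω ^ 2 ∂P) = 2 := by
    have : (fun ω => X ω ^ 2) = fun ω => a ω ^ 2 - 2 * (a ω * b ω) + b ω ^ 2 := by
      funext ω; simp only [hXdef]; ring
    rw [this, integral_add hsub hb2, integral_sub ha2 hab2, integral_const_mul,
      hEa2, hEb2, hEab]
    ring
  -- bound on the p-th moment of X
  have hEXp : (∫ ω, |X ω| ^ p ∂P) ≤ M := by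
    have hpt : ∀ ω, |X ω| ^ p ≤ 2 ^ p * (|a ω| ^ p + |b ω| ^ p) := by
      intro ω
      have h1 : |X ω| ≤ 2 * max |a ω| |b ω| := by
        have := abs_sub (a ω) (b ω)
        have h2 : |a ω| ≤ max |a ω| |b ω| := le_max_left _ _
        have h3 : |b ω| ≤ max |a ω| |b ω| := le_max_right _ _
        calc |X ω| ≤ |a ω| + |b ω| := abs_sub _ _
          _ ≤ 2 * max |a ω| |b ω| := by linarith
      have h2 : |X ω| ^ p ≤ (2 * max |a ω| |b ω|) ^ p :=
        Real.rpow_le_rpow (abs_nonneg _) h1 hp0.le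
      have h3 : (2 * max |a ω| |b ω|) ^ p = 2 ^ p * (max |a ω| |b ω|) ^ p :=
        Real.mul_rpow (by norm_num) (le_max_of_le_left (abs_nonneg _))
      have h4 : (max |a ω| |b ω|) ^ p ≤ |a ω| ^ p + |b ω| ^ p := by
        rcases max_cases |a ω| |b ω| with ⟨h, _⟩ | ⟨h, _⟩ <;> rw [h]
        · nlinarith [Real.rpow_nonneg (abs_nonneg (b ω)) p]
        · nlinarith [Real.rpow_nonneg (abs_nonneg (a ω)) p]
      calc |X ω| ^ p ≤ 2 ^ p * (max |a ω| |b ω|) ^ p := by rw [← h3]; exact h2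
        _ ≤ 2 ^ p * (|a ω| ^ p + |b ω| ^ p) := by
            have : (0:ℝ) < 2 ^ p := Real.rpow_pos_of_pos (by norm_num) _
            nlinarith
    calc (∫ ω, |X ω| ^ p ∂P) ≤ ∫ ω, 2 ^ p * (|a ω| ^ p + |b ω| ^ p) ∂P := by
          apply integral_mono hXP (((haP.add hbP).const_mul _)) hpt
      _ = 2 ^ p * ((∫ ω, |a ω| ^ p ∂P) + ∫ ω, |b ω| ^ p ∂P) := by
          rw [integral_const_mul, integral_add haP hbP]
      _ ≤ 2 ^ p * (2 * K) := by
          have h2p : (0:ℝ) < 2 ^ p := Real.rpow_pos_of_pos (by norm_num) _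
          exact mul_le_mul_of_nonneg_left (by linarith) h2p.le
  -- the event A
  set A : Set Ω := {ω | 1 ≤ |X ω|} with hAdef
  have hA : MeasurableSet A := measurableSet_le measurable_const hmX.abs
  have hPAne : P A ≠ ⊤ := measure_ne_top _ _
  -- the dominating function
  set g : Ω → ℝ := fun ω => 1 + T ^ 2 * A.indicator (fun _ => (1:ℝ)) ω + |X ω| ^ p / T ^ η
    with hgdef
  have hind : Integrable (A.indicator (fun _ => (1:ℝ))) P := (integrable_const 1).indicator hA
  have hind2 : Integrable (fun ω => T ^ 2 * A.indicator (fun _ => (1:ℝ)) ω) P := hind.const_mul _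
  have hdivInt : Integrable (fun ω => |X ω| ^ p / T ^ η) P := hXP.div_const _
  have h1i : Integrable (fun ω => 1 + T ^ 2 * A.indicator (fun _ => (1:ℝ)) ω) P :=
    (integrable_const 1).add hind2
  have hgInt : Integrable g P := h1i.add hdivInt
  have hptg : ∀ ω, X ω ^ 2 ≤ g ω := by
    intro ω
    have hnn : 0 ≤ |X ω| ^ p / T ^ η :=
      div_nonneg (Real.rpow_nonneg (abs_nonneg _) _) hTeta0.le
    by_cases h1 : 1 ≤ |X ω|
    · have hmem : ω ∈ A := h1
      have hind : A.indicator (fun _ => (1:ℝ)) ω = 1 := Set.indicator_of_mem hmem _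
      by_cases h2 : |X ω| ≤ T
      · have : X ω ^ 2 ≤ T ^ 2 := by
          rw [← sq_abs]; exact pow_le_pow_left₀ (abs_nonneg _) h2 2
        simp only [hgdef, hind, mul_one]
        set u := |X ω| ^ p / T ^ η with hu
        linarith
      · push_neg at h2
        have hXpos : (0:ℝ) < |X ω| := lt_trans hT0 h2
        have hsplit : |X ω| ^ p = |X ω| ^ (2:ℝ) * |X ω| ^ η := by
          rw [← Real.rpow_add hXpos]
        have h2r : |X ω| ^ (2:ℝ) = X ω ^ 2 := by
          rw [Real.rpow_two, sq_abs]
        have heta : T ^ η ≤ |X ω| ^ η := Real.rpow_le_rpow hT0.le h2.le hη.le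
        have key : X ω ^ 2 ≤ |X ω| ^ p / T ^ η := by
          rw [le_div_iff₀ hTeta0, hsplit, h2r]
          have := sq_nonneg (X ω)
          nlinarith
        simp only [hgdef, hind, mul_one]
        set u := |X ω| ^ p / T ^ η with hu
        linarith
    · push_neg at h1
      have : X ω ^ 2 < 1 := by
        rw [← sq_abs]
        nlinarith [abs_nonneg (X ω)]
      have hind : 0 ≤ A.indicator (fun _ => (1:ℝ)) ω :=
        Set.indicator_nonneg (fun _ _ => zero_le_one) _
      have hTind : 0 ≤ T ^ 2 * A.indicator (fun _ => (1:ℝ)) ω :=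
        mul_nonneg (sq_nonneg T) hind
      simp only [hgdef]
      set u := |X ω| ^ p / T ^ η with hu
      linarith
  have hIg : (∫ ω, g ω ∂P) = 1 + T ^ 2 * (P A).toReal + (∫ ω, |X ω| ^ p ∂P) / T ^ η := by
    rw [hgdef]
    rw [integral_add h1i hdivInt, integral_add (integrable_const 1) hind2,
      integral_const, integral_const_mul, integral_indicator_const (1:ℝ) hA, integral_div]
    simp [Measure.real]
  have hPA : 1 / (2 * T ^ 2) ≤ (P A).toReal := by
    have hle : (2:ℝ) ≤ 1 + T ^ 2 * (P A).toReal + (∫ ω, |X ω| ^ p ∂P) / T ^ η := by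
      rw [← hEX2, ← hIg]
      exact integral_mono hX2 hgInt hptg
    have hdiv : (∫ ω, |X ω| ^ p ∂P) / T ^ η ≤ 1 / 2 := by
      rw [div_le_iff₀ hTeta0]
      linarith
    have hT2pos : (0:ℝ) < T ^ 2 := by nlinarith
    rw [div_le_iff₀ (by nlinarith)]
    nlinarith
  -- conclude
  have hcompl : {ω | |a ω - b ω| < 1} = Aᶜ := by
    ext ω
    simp [hAdef, hXdef, not_le]
  rw [hcompl, measure_compl hA hPAne, measure_univ]
  have h1 : ENNReal.ofReal (1 - 1 / (2 * T ^ 2))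
      = 1 - ENNReal.ofReal (1 / (2 * T ^ 2)) := by
    rw [ENNReal.ofReal_sub _ hfrac0.le, ENNReal.ofReal_one]
  rw [h1]
  apply tsub_le_tsub_left
  calc ENNReal.ofReal (1 / (2 * T ^ 2)) ≤ ENNReal.ofReal (P A).toReal :=
        ENNReal.ofReal_le_ofReal hPA
    _ = P A := ENNReal.ofReal_toReal hPAne
end

section
/- Assume that for all k,n, E[a_{k,n}] = 0, E[a_{k,n}²] = 1, E[b_{k,n}] = 0, E[b_{k,n}²] = 1. Then for every n ≥ 1 and all s, t ∈ [0,2π]: E_{ℙ⊗ℙ_X}[|S_n(t) − S_n(s)|²] ≤ |t − s|² and E_{ℙ⊗ℙ_X}[|S_n′(t) − S_n′(s)|²] ≤ |t − s|², where S_n′ denotes the derivative of S_n with respect to t. -/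
open MeasureTheory ProbabilityTheory Filter Set Real

noncomputable section

variable {Ω : Type*} [MeasurableSpace Ω]

/-- The family `(c k)_{k ≥ 1}` is `m`-dependent: any two subfamilies whose index sets are at
distance more than `m` are independent. -/
def MDependent (P : Measure Ω) (m : ℕ) (c : ℕ → Ω → ℝ) : Prop :=
  ∀ I J : Set ℕ, (∀ i ∈ I, 1 ≤ i) → (∀ j ∈ J, 1 ≤ j) →
    (∀ i ∈ I, ∀ j ∈ J, (m : ℤ) < |(i : ℤ) - (j : ℤ)|) →
    ProbabilityTheory.Indep
      (MeasurableSpace.comap (fun ω (i : I) => c i.1 ω) inferInstance)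
      (MeasurableSpace.comap (fun ω (j : J) => c j.1 ω) inferInstance) P

/-- The two arrays `a` and `b` are independent. -/
def IndepArrays (P : Measure Ω) (a b : ℕ → ℕ → Ω → ℝ) : Prop :=
  ProbabilityTheory.IndepFun (fun ω (p : ℕ × ℕ) => a p.1 p.2 ω)
    (fun ω (p : ℕ × ℕ) => b p.1 p.2 ω) P

/-- Condition (A.1): centered, unit variance, uniformly bounded `(2+η)`-moments. -/
def CondA1 (P : Measure Ω) (a : ℕ → ℕ → Ω → ℝ) (η K : ℝ) : Prop :=
  ∀ k, 1 ≤ k → ∀ n, 1 ≤ n → Measurable (a k n) ∧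
    MeasureTheory.MemLp (a k n) (ENNReal.ofReal (2 + η)) P ∧
    (∫ ω, a k n ω ∂P) = 0 ∧ (∫ ω, (a k n ω) ^ 2 ∂P) = 1 ∧
    (∫ ω, |a k n ω| ^ (2 + η) ∂P) ≤ K

/-- Condition (A.2): weak stationarity with common covariance function `ρ n`. -/
def CondA2 (P : Measure Ω) (a b : ℕ → ℕ → Ω → ℝ) (ρ : ℕ → ℕ → ℝ) : Prop :=
  ∀ n, 1 ≤ n → ∀ k, 1 ≤ k → ∀ l, 1 ≤ l →
    (∫ ω, a k n ω * a l n ω ∂P) = ρ n ((k : ℤ) - l).natAbs ∧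
    (∫ ω, b k n ω * b l n ω ∂P) = ρ n ((k : ℤ) - l).natAbs

/-- Condition (A.3): the spectral measures have densities `ψn n` converging uniformly to a
density `ψ` whose infimum `κ` on `[-π, π]` is positive. -/
def CondA3 (ρ : ℕ → ℕ → ℝ) (ψn : ℕ → ℝ → ℝ) (ψ : ℝ → ℝ) (κ : ℝ) : Prop :=
  (∀ n, 1 ≤ n →
    (∀ x ∈ Set.Icc (-π) π, 0 ≤ ψn n x) ∧
    MeasureTheory.IntegrableOn (ψn n) (Set.Icc (-π) π) ∧
    (∫ x in Set.Icc (-π) π, ψn n x) = 1 ∧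
    (∀ k : ℤ, ((ρ n k.natAbs : ℝ) : ℂ) =
      (1 / (2 * π)) * ∫ x in Set.Icc (-π) π, Complex.exp (Complex.I * k * x) * (ψn n x : ℂ))) ∧
  ((∀ x ∈ Set.Icc (-π) π, 0 ≤ ψ x) ∧ MeasureTheory.IntegrableOn ψ (Set.Icc (-π) π) ∧
    (∫ x in Set.Icc (-π) π, ψ x) = 1) ∧
  (∀ ε > 0, ∃ N, ∀ n ≥ N, ∀ x ∈ Set.Icc (-π) π, |ψn n x - ψ x| ≤ ε) ∧
  κ = sInf (ψ '' Set.Icc (-π) π) ∧ 0 < κ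

/-- The random trigonometric polynomial `f n`. -/
def fpoly (a b : ℕ → ℕ → Ω → ℝ) (n : ℕ) (ω : Ω) (t : ℝ) : ℝ :=
  ∑ k ∈ Finset.Icc 1 n, (a k n ω * Real.cos (k * t) + b k n ω * Real.sin (k * t))

/-- Number of zeros of `g` in `[0, 2π]`. -/
def Nzeros (g : ℝ → ℝ) : ℕ := Set.ncard {t : ℝ | t ∈ Set.Icc 0 (2 * π) ∧ g t = 0}

/-- The uniform probability measure on `[0, 2π]`. -/
def unif2pi : Measure ℝ := ENNReal.ofReal (1 / (2 * π)) • volume.restrict (Set.Icc 0 (2 * π))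

/-- The localized, rescaled random field `S n`, as a function on the product space `Ω × ℝ`. -/
def Sproc (a b : ℕ → ℕ → Ω → ℝ) (n : ℕ) (p : Ω × ℝ) (t : ℝ) : ℝ :=
  (1 / Real.sqrt n) * ∑ k ∈ Finset.Icc 1 n,
    (a k n p.1 * Real.cos (k * p.2 + k * t / n) + b k n p.1 * Real.sin (k * p.2 + k * t / n))

/-- The localized, rescaled random field `S n` at a fixed point `x`. -/
def Sx (a b : ℕ → ℕ → Ω → ℝ) (n : ℕ) (x : ℝ) (ω : Ω) (t : ℝ) : ℝ :=
  (1 / Real.sqrt n) * ∑ k ∈ Finset.Icc 1 n,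
    (a k n ω * Real.cos (k * x + k * t / n) + b k n ω * Real.sin (k * x + k * t / n))



lemma sin_two_pi_int (m : ℤ) : Real.sin ((m:ℝ) * (2*π)) = 0 := by
  have h : (m:ℝ) * (2*π) = ((2*m : ℤ) : ℝ) * π := by push_cast; ring
  rw [h, Real.sin_int_mul_pi]

lemma cos_two_pi_int (m : ℤ) : Real.cos ((m:ℝ) * (2*π)) = 1 := by
  exact Real.cos_int_mul_two_pi m

lemma Icos0 (m : ℝ) (hm : m ≠ 0) (hs : Real.sin (m*(2*π)) = 0) :
    ∫ x in (0:ℝ)..(2*π), Real.cos (m*x) = 0 := by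
  have h : ∀ x ∈ Set.uIcc (0:ℝ) (2*π), HasDerivAt (fun y => Real.sin (m*y)/m) (Real.cos (m*x)) x := by
    intro x _
    have h1 : HasDerivAt (fun y : ℝ => m*y) (m*1) x := (hasDerivAt_id x).const_mul m
    have h2 := (h1.sin).div_const m
    refine h2.congr_deriv ?_
    field_simp
  have hint : IntervalIntegrable (fun x => Real.cos (m*x)) volume 0 (2*π) := by
    apply Continuous.intervalIntegrable; fun_prop
  rw [intervalIntegral.integral_eq_sub_of_hasDerivAt h hint]
  simp [hs]

lemma Isin0 (m : ℝ) (hc : Real.cos (m*(2*π)) = 1) :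
    ∫ x in (0:ℝ)..(2*π), Real.sin (m*x) = 0 := by
  by_cases hm : m = 0
  · simp [hm]
  have h : ∀ x ∈ Set.uIcc (0:ℝ) (2*π), HasDerivAt (fun y => -Real.cos (m*y)/m) (Real.sin (m*x)) x := by
    intro x _
    have h1 : HasDerivAt (fun y : ℝ => m*y) (m*1) x := (hasDerivAt_id x).const_mul m
    have h2 := ((h1.cos).neg).div_const m
    refine h2.congr_deriv ?_
    field_simp
  have hint : IntervalIntegrable (fun x => Real.sin (m*x)) volume 0 (2*π) := by
    apply Continuous.intervalIntegrable; fun_prop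
  rw [intervalIntegral.integral_eq_sub_of_hasDerivAt h hint]
  simp [hc]


lemma Icos_nat (k l : ℕ) : ∫ x in (0:ℝ)..(2*π), Real.cos (((k:ℝ)-l)*x) = if k = l then 2*π else 0 := by
  by_cases h : k = l
  · simp [h]
  · rw [if_neg h]
    apply Icos0
    · intro hc
      apply h
      have : (k:ℝ) = l := by linarith [sub_eq_zero.mp hc]
      exact_mod_cast this
    · have := sin_two_pi_int ((k:ℤ) - l)
      push_cast at this
      convert this using 2
  
lemma Icos_nat_add (k l : ℕ) (hk : 1 ≤ k) : ∫ x in (0:ℝ)..(2*π), Real.cos (((k:ℝ)+l)*x) = 0 := by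
  apply Icos0
  · positivity
  · have := sin_two_pi_int ((k:ℤ) + l)
    push_cast at this
    convert this using 2

lemma Isin_nat (k l : ℕ) : ∫ x in (0:ℝ)..(2*π), Real.sin (((k:ℝ)-l)*x) = 0 := by
  apply Isin0
  have := cos_two_pi_int ((k:ℤ) - l)
  push_cast at this
  convert this using 2

lemma Isin_nat_add (k l : ℕ) : ∫ x in (0:ℝ)..(2*π), Real.sin (((k:ℝ)+l)*x) = 0 := by
  apply Isin0
  have := cos_two_pi_int ((k:ℤ) + l)
  push_cast at this
  convert this using 2

lemma orth_cc (k l : ℕ) (hk : 1 ≤ k) (hl : 1 ≤ l) :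
    ∫ x in (0:ℝ)..(2*π), Real.cos (k*x) * Real.cos (l*x) = if k = l then π else 0 := by
  have key : ∀ x : ℝ, Real.cos (k*x) * Real.cos (l*x)
      = (Real.cos (((k:ℝ)-l)*x) + Real.cos (((k:ℝ)+l)*x))/2 := by
    intro x
    have h1 : ((k:ℝ)-l)*x = k*x - l*x := by ring
    have h2 : ((k:ℝ)+l)*x = k*x + l*x := by ring
    rw [h1, h2, Real.cos_sub, Real.cos_add]; ring
  simp only [key]
  have i1 : IntervalIntegrable (fun x => Real.cos (((k:ℝ)-l)*x)) volume 0 (2*π) := by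
    apply Continuous.intervalIntegrable; fun_prop
  have i2 : IntervalIntegrable (fun x => Real.cos (((k:ℝ)+l)*x)) volume 0 (2*π) := by
    apply Continuous.intervalIntegrable; fun_prop
  rw [intervalIntegral.integral_div, intervalIntegral.integral_add i1 i2,
    Icos_nat k l, Icos_nat_add k l hk]
  by_cases h : k = l <;> simp [h]

lemma orth_ss (k l : ℕ) (hk : 1 ≤ k) (hl : 1 ≤ l) :
    ∫ x in (0:ℝ)..(2*π), Real.sin (k*x) * Real.sin (l*x) = if k = l then π else 0 := by
  have key : ∀ x : ℝ, Real.sin (k*x) * Real.sin (l*x)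
      = (Real.cos (((k:ℝ)-l)*x) - Real.cos (((k:ℝ)+l)*x))/2 := by
    intro x
    have h1 : ((k:ℝ)-l)*x = k*x - l*x := by ring
    have h2 : ((k:ℝ)+l)*x = k*x + l*x := by ring
    rw [h1, h2, Real.cos_sub, Real.cos_add]; ring
  simp only [key]
  have i1 : IntervalIntegrable (fun x => Real.cos (((k:ℝ)-l)*x)) volume 0 (2*π) := by
    apply Continuous.intervalIntegrable; fun_prop
  have i2 : IntervalIntegrable (fun x => Real.cos (((k:ℝ)+l)*x)) volume 0 (2*π) := by
    apply Continuous.intervalIntegrable; fun_prop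
  rw [intervalIntegral.integral_div, intervalIntegral.integral_sub i1 i2,
    Icos_nat k l, Icos_nat_add k l hk]
  by_cases h : k = l <;> simp [h]

lemma orth_cs (k l : ℕ) : ∫ x in (0:ℝ)..(2*π), Real.cos (k*x) * Real.sin (l*x) = 0 := by
  have key : ∀ x : ℝ, Real.cos (k*x) * Real.sin (l*x)
      = (Real.sin (((l:ℝ)+k)*x) + Real.sin (((l:ℝ)-k)*x))/2 := by
    intro x
    have h1 : ((l:ℝ)-k)*x = l*x - k*x := by ring
    have h2 : ((l:ℝ)+k)*x = l*x + k*x := by ring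
    rw [h1, h2, Real.sin_sub, Real.sin_add]; ring
  simp only [key]
  have i1 : IntervalIntegrable (fun x => Real.sin (((l:ℝ)+k)*x)) volume 0 (2*π) := by
    apply Continuous.intervalIntegrable; fun_prop
  have i2 : IntervalIntegrable (fun x => Real.sin (((l:ℝ)-k)*x)) volume 0 (2*π) := by
    apply Continuous.intervalIntegrable; fun_prop
  rw [intervalIntegral.integral_div, intervalIntegral.integral_add i1 i2,
    Isin_nat l k, Isin_nat_add l k]
  simp


lemma parseval (n : ℕ) (A B : ℕ → ℝ) :
    ∫ x in (0:ℝ)..(2*π),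
      (∑ k ∈ Finset.Icc 1 n, (A k * Real.cos (k*x) + B k * Real.sin (k*x)))^2
    = π * ∑ k ∈ Finset.Icc 1 n, (A k^2 + B k^2) := by
  have hTT : ∀ k ∈ Finset.Icc 1 n, ∀ l ∈ Finset.Icc 1 n,
      ∫ x in (0:ℝ)..(2*π),
        (A k * Real.cos (k*x) + B k * Real.sin (k*x)) *
        (A l * Real.cos (l*x) + B l * Real.sin (l*x))
      = if k = l then π * (A k * A l + B k * B l) else 0 := by
    intro k hk l hl
    rw [Finset.mem_Icc] at hk hl
    have key : ∀ x : ℝ,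
        (A k * Real.cos (k*x) + B k * Real.sin (k*x)) *
        (A l * Real.cos (l*x) + B l * Real.sin (l*x))
        = A k * A l * (Real.cos (k*x) * Real.cos (l*x))
          + B k * B l * (Real.sin (k*x) * Real.sin (l*x))
          + A k * B l * (Real.cos (k*x) * Real.sin (l*x))
          + B k * A l * (Real.cos (l*x) * Real.sin (k*x)) := by
      intro x; ring
    simp only [key]
    have icc : IntervalIntegrable (fun x => Real.cos (k*x) * Real.cos (l*x)) volume 0 (2*π) := by
      apply Continuous.intervalIntegrable; fun_prop
    have iss : IntervalIntegrable (fun x => Real.sin (k*x) * Real.sin (l*x)) volume 0 (2*π) := by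
      apply Continuous.intervalIntegrable; fun_prop
    have ics : IntervalIntegrable (fun x => Real.cos (k*x) * Real.sin (l*x)) volume 0 (2*π) := by
      apply Continuous.intervalIntegrable; fun_prop
    have isc : IntervalIntegrable (fun x => Real.cos (l*x) * Real.sin (k*x)) volume 0 (2*π) := by
      apply Continuous.intervalIntegrable; fun_prop
    rw [intervalIntegral.integral_add (((icc.const_mul _).add (iss.const_mul _)).add (ics.const_mul _)) (isc.const_mul _),
      intervalIntegral.integral_add ((icc.const_mul _).add (iss.const_mul _)) (ics.const_mul _),
      intervalIntegral.integral_add (icc.const_mul _) (iss.const_mul _),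
      intervalIntegral.integral_const_mul, intervalIntegral.integral_const_mul,
      intervalIntegral.integral_const_mul, intervalIntegral.integral_const_mul,
      orth_cc k l hk.1 hl.1, orth_ss k l hk.1 hl.1, orth_cs k l, orth_cs l k]
    by_cases h : k = l <;> simp [h] <;> ring
  have hsq : ∀ x : ℝ,
      (∑ k ∈ Finset.Icc 1 n, (A k * Real.cos (k*x) + B k * Real.sin (k*x)))^2
      = ∑ k ∈ Finset.Icc 1 n, ∑ l ∈ Finset.Icc 1 n,
          (A k * Real.cos (k*x) + B k * Real.sin (k*x)) *
          (A l * Real.cos (l*x) + B l * Real.sin (l*x)) := by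
    intro x
    rw [sq, Finset.sum_mul_sum]
  simp only [hsq]
  rw [intervalIntegral.integral_finset_sum]
  · have : ∀ k ∈ Finset.Icc 1 n,
        (∫ x in (0:ℝ)..(2*π), ∑ l ∈ Finset.Icc 1 n,
          (A k * Real.cos (k*x) + B k * Real.sin (k*x)) *
          (A l * Real.cos (l*x) + B l * Real.sin (l*x)))
        = π * (A k^2 + B k^2) := by
      intro k hk
      rw [intervalIntegral.integral_finset_sum]
      · rw [Finset.sum_congr rfl (hTT k hk)]
        rw [Finset.sum_ite_eq (Finset.Icc 1 n) k (fun l => π * (A k * A l + B k * B l))]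
        simp only [hk, if_pos]
        ring
      · intro l hl
        apply Continuous.intervalIntegrable; fun_prop
    rw [Finset.sum_congr rfl this, Finset.mul_sum]
  · intro k hk
    exact (continuous_finset_sum _ fun l _ => by fun_prop).intervalIntegrable _ _



instance : IsProbabilityMeasure unif2pi := by
  constructor
  rw [unif2pi]
  simp [Measure.restrict_apply, Real.volume_Icc]
  rw [show (2:ENNReal) = ENNReal.ofReal 2 by simp, ← ENNReal.ofReal_mul (by norm_num), ← ENNReal.ofReal_mul (by positivity)]
  rw [show π⁻¹ * 2⁻¹ * (2*π) = 1 by field_simp]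
  simp

lemma integral_unif2pi (f : ℝ → ℝ) :
    ∫ x, f x ∂unif2pi = (1/(2*π)) * ∫ x in (0:ℝ)..(2*π), f x := by
  rw [unif2pi, integral_smul_measure, ENNReal.toReal_ofReal (by positivity), smul_eq_mul]
  congr 1
  rw [intervalIntegral.integral_of_le (by positivity)]
  exact integral_Icc_eq_integral_Ioc

lemma term_rearrange (c d φ ψ : ℝ) (k : ℕ) (x : ℝ) :
    c * (Real.cos (k*x + φ) - Real.cos (k*x + ψ)) + d * (Real.sin (k*x + φ) - Real.sin (k*x + ψ))
    = (c*(Real.cos φ - Real.cos ψ) + d*(Real.sin φ - Real.sin ψ)) * Real.cos (k*x)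
      + (d*(Real.cos φ - Real.cos ψ) - c*(Real.sin φ - Real.sin ψ)) * Real.sin (k*x) := by
  simp only [Real.cos_add, Real.sin_add]; ring

lemma AB_sq (c d φ ψ : ℝ) :
    (c*(Real.cos φ - Real.cos ψ) + d*(Real.sin φ - Real.sin ψ))^2
    + (d*(Real.cos φ - Real.cos ψ) - c*(Real.sin φ - Real.sin ψ))^2
    = (c^2 + d^2) * (2 - 2*Real.cos (φ - ψ)) := by
  rw [Real.cos_sub]
  linear_combination (c^2 + d^2) * (Real.sin_sq_add_cos_sq φ) + (c^2 + d^2) * (Real.sin_sq_add_cos_sq ψ)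

/-- inner integral over x -/
lemma inner_eq (n : ℕ) (s t : ℝ) (c d : ℕ → ℝ) :
    ∫ x, (∑ k ∈ Finset.Icc 1 n,
        (c k * (Real.cos (k*x + k*t/n) - Real.cos (k*x + k*s/n))
          + d k * (Real.sin (k*x + k*t/n) - Real.sin (k*x + k*s/n))))^2 ∂unif2pi
    = ∑ k ∈ Finset.Icc 1 n, (c k^2 + d k^2) * (1 - Real.cos ((k:ℝ)*(t-s)/n)) := by
  set A : ℕ → ℝ := fun k => c k * (Real.cos ((k:ℝ)*t/n) - Real.cos ((k:ℝ)*s/n))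
    + d k * (Real.sin ((k:ℝ)*t/n) - Real.sin ((k:ℝ)*s/n)) with hA
  set B : ℕ → ℝ := fun k => d k * (Real.cos ((k:ℝ)*t/n) - Real.cos ((k:ℝ)*s/n))
    - c k * (Real.sin ((k:ℝ)*t/n) - Real.sin ((k:ℝ)*s/n)) with hB
  have hre : ∀ x : ℝ, (∑ k ∈ Finset.Icc 1 n,
        (c k * (Real.cos (k*x + k*t/n) - Real.cos (k*x + k*s/n))
          + d k * (Real.sin (k*x + k*t/n) - Real.sin (k*x + k*s/n))))
      = ∑ k ∈ Finset.Icc 1 n, (A k * Real.cos (k*x) + B k * Real.sin (k*x)) := by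
    intro x
    apply Finset.sum_congr rfl
    intro k _
    exact term_rearrange (c k) (d k) ((k:ℝ)*t/n) ((k:ℝ)*s/n) k x
  simp only [hre]
  rw [integral_unif2pi, parseval]
  rw [← mul_assoc]
  have hπ : 1/(2*π) * π = 1/2 := by field_simp
  rw [hπ, Finset.mul_sum]
  apply Finset.sum_congr rfl
  intro k _
  rw [hA, hB]
  have := AB_sq (c k) (d k) ((k:ℝ)*t/n) ((k:ℝ)*s/n)
  have harg : (k:ℝ)*t/n - (k:ℝ)*s/n = (k:ℝ)*(t-s)/n := by ring
  rw [harg] at this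
  rw [this]
  ring




lemma integrable_unif2pi_of_continuous {f : ℝ → ℝ} (hf : Continuous f) :
    Integrable f unif2pi := by
  rw [unif2pi]
  exact (hf.integrableOn_Icc).smul_measure ENNReal.ofReal_ne_top

lemma master (P : Measure Ω) [IsProbabilityMeasure P] (n : ℕ) (hn : 1 ≤ n) (s t : ℝ)
    (c d : ℕ → Ω → ℝ) (hmc : ∀ k, Measurable (c k)) (hmd : ∀ k, Measurable (d k))
    (hic : ∀ k ∈ Finset.Icc 1 n, Integrable (fun ω => (c k ω)^2) P ∧ (∫ ω, (c k ω)^2 ∂P) ≤ 1/n)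
    (hid : ∀ k ∈ Finset.Icc 1 n, Integrable (fun ω => (d k ω)^2) P ∧ (∫ ω, (d k ω)^2 ∂P) ≤ 1/n) :
    ∫ p : Ω × ℝ, (∑ k ∈ Finset.Icc 1 n,
        (c k p.1 * (Real.cos (k*p.2 + k*t/n) - Real.cos (k*p.2 + k*s/n))
          + d k p.1 * (Real.sin (k*p.2 + k*t/n) - Real.sin (k*p.2 + k*s/n))))^2 ∂(P.prod unif2pi)
    ≤ (t-s)^2 := by
  set F : Ω × ℝ → ℝ := fun p => ∑ k ∈ Finset.Icc 1 n,
        (c k p.1 * (Real.cos (k*p.2 + k*t/n) - Real.cos (k*p.2 + k*s/n))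
          + d k p.1 * (Real.sin (k*p.2 + k*t/n) - Real.sin (k*p.2 + k*s/n))) with hF
  have hFmeas : Measurable F := by
    apply Finset.measurable_sum
    intro k _
    apply Measurable.add
    · exact ((hmc k).comp measurable_fst).mul (by fun_prop)
    · exact ((hmd k).comp measurable_fst).mul (by fun_prop)
  set g : Ω → ℝ := fun ω => ∑ k ∈ Finset.Icc 1 n,
      ((c k ω)^2 + (d k ω)^2) * (1 - Real.cos ((k:ℝ)*(t-s)/n)) with hg
  have hsec : ∀ ω : Ω, (∫ x, (F (ω, x))^2 ∂unif2pi) = g ω := by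
    intro ω
    exact inner_eq n s t (fun k => c k ω) (fun k => d k ω)
  have hgint : Integrable g P := by
    apply integrable_finset_sum
    intro k hk
    exact (((hic k hk).1.add (hid k hk).1).mul_const _)
  have hF2int : Integrable (fun p => (F p)^2) (P.prod unif2pi) := by
    rw [integrable_prod_iff ((hFmeas.pow_const 2).aestronglyMeasurable)]
    constructor
    · apply Filter.Eventually.of_forall
      intro ω
      apply integrable_unif2pi_of_continuous
      apply Continuous.pow
      apply continuous_finset_sum
      intro k _
      fun_prop
    · have : (fun ω => ∫ x, ‖(F (ω, x))^2‖ ∂unif2pi) = g := by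
        funext ω
        rw [← hsec ω]
        congr 1
        funext x
        rw [Real.norm_eq_abs, abs_pow, sq_abs]
      rw [this]
      exact hgint
  rw [integral_prod _ hF2int]
  have : (fun ω => ∫ x, (F (ω, x))^2 ∂unif2pi) = g := funext hsec
  rw [this]
  rw [hg, integral_finset_sum _ (fun k hk => by
    exact Integrable.mul_const ((hic k hk).1.add (hid k hk).1) _)]
  have hbound : ∀ k ∈ Finset.Icc 1 n,
      (∫ ω, ((c k ω)^2 + (d k ω)^2) * (1 - Real.cos ((k:ℝ)*(t-s)/n)) ∂P) ≤ (t-s)^2 / n := by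
    intro k hk
    rw [Finset.mem_Icc] at hk
    rw [integral_mul_const, integral_add (hic k (Finset.mem_Icc.mpr hk)).1 (hid k (Finset.mem_Icc.mpr hk)).1]
    set θ := (k:ℝ)*(t-s)/n with hθ
    have h1 : (0:ℝ) ≤ 1 - Real.cos θ := by linarith [Real.cos_le_one θ]
    have h2 : 1 - Real.cos θ ≤ θ^2/2 := by linarith [Real.one_sub_sq_div_two_le_cos (x := θ)]
    have h3 : θ^2 ≤ (t-s)^2 := by
      rw [hθ]
      have hkn : (k:ℝ) ≤ (n:ℝ) := by exact_mod_cast hk.2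
      have hn0 : (0:ℝ) < n := by exact_mod_cast hn
      rw [div_pow, mul_pow]
      rw [div_le_iff₀ (by positivity)]
      have hk2 : (k:ℝ)^2 ≤ (n:ℝ)^2 := by nlinarith [hk.2, Nat.cast_nonneg (α := ℝ) k]
      nlinarith [sq_nonneg (t-s)]
    have hsum : (∫ ω, (c k ω)^2 ∂P) + (∫ ω, (d k ω)^2 ∂P) ≤ 2/n := by
      have := (hic k (Finset.mem_Icc.mpr hk)).2
      have := (hid k (Finset.mem_Icc.mpr hk)).2
      have h2n : (2:ℝ)/n = 1/n + 1/n := by ring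
      linarith
    have hIpos : 0 ≤ (∫ ω, (c k ω)^2 ∂P) + (∫ ω, (d k ω)^2 ∂P) := by
      have := integral_nonneg (f := fun ω => (c k ω)^2) (fun ω => sq_nonneg (c k ω)) (μ := P)
      have := integral_nonneg (f := fun ω => (d k ω)^2) (fun ω => sq_nonneg (d k ω)) (μ := P)
      linarith
    have hn0 : (0:ℝ) < n := by exact_mod_cast hn
    calc ((∫ ω, (c k ω)^2 ∂P) + (∫ ω, (d k ω)^2 ∂P)) * (1 - Real.cos θ)
        ≤ (2/n) * (1 - Real.cos θ) := by apply mul_le_mul_of_nonneg_right hsum h1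
      _ ≤ (2/n) * (θ^2/2) := by
          apply mul_le_mul_of_nonneg_left h2 (by positivity)
      _ ≤ (2/n) * ((t-s)^2/2) := by
          apply mul_le_mul_of_nonneg_left (by linarith) (by positivity)
      _ = (t-s)^2 / n := by ring
  calc (∑ k ∈ Finset.Icc 1 n, ∫ ω, ((c k ω)^2 + (d k ω)^2) * (1 - Real.cos ((k:ℝ)*(t-s)/n)) ∂P)
      ≤ ∑ k ∈ Finset.Icc 1 n, (t-s)^2/n := Finset.sum_le_sum hbound
    _ = n * ((t-s)^2/n) := by rw [Finset.sum_const, Nat.card_Icc]; simp [nsmul_eq_mul]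
    _ = (t-s)^2 := by field_simp



lemma aux_integrable_of_integral_eq_one {f : Ω → ℝ} {P : Measure Ω} (h : (∫ ω, f ω ∂P) = 1) :
    Integrable f P := by
  by_contra hI
  rw [integral_undef hI] at h
  exact zero_ne_one h

lemma hasDeriv_Sproc (a b : ℕ → ℕ → Ω → ℝ) (n : ℕ) (p : Ω × ℝ) (τ : ℝ) :
    HasDerivAt (Sproc a b n p)
      ((1/Real.sqrt n) * ∑ k ∈ Finset.Icc 1 n,
        ((k:ℝ)/n * (b k n p.1 * Real.cos ((k:ℝ)*p.2 + k*τ/n)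
          - a k n p.1 * Real.sin ((k:ℝ)*p.2 + k*τ/n)))) τ := by
  have hterm : ∀ k ∈ Finset.Icc 1 n,
      HasDerivAt (fun τ : ℝ => a k n p.1 * Real.cos ((k:ℝ)*p.2 + (k:ℝ)*τ/n)
          + b k n p.1 * Real.sin ((k:ℝ)*p.2 + (k:ℝ)*τ/n))
        ((k:ℝ)/n * (b k n p.1 * Real.cos ((k:ℝ)*p.2 + (k:ℝ)*τ/n)
          - a k n p.1 * Real.sin ((k:ℝ)*p.2 + (k:ℝ)*τ/n))) τ := by
    intro k _
    have h1 : HasDerivAt (fun τ : ℝ => (k:ℝ)*τ) ((k:ℝ)) τ := by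
      simpa using (hasDerivAt_id τ).const_mul (k:ℝ)
    have hu : HasDerivAt (fun τ : ℝ => (k:ℝ)*p.2 + (k:ℝ)*τ/n) ((k:ℝ)/n) τ := by
      have h2 := (h1.div_const (n:ℝ)).const_add ((k:ℝ)*p.2)
      exact h2
    have h3 := ((hu.cos).const_mul (a k n p.1)).add ((hu.sin).const_mul (b k n p.1))
    refine h3.congr_deriv ?_
    ring
  have hsum := (HasDerivAt.fun_sum hterm).const_mul (1/Real.sqrt n)
  exact hsum


theorem statement12 (P : Measure Ω) [IsProbabilityMeasure P]
    (a b : ℕ → ℕ → Ω → ℝ)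
    (hab : IndepArrays P a b)
    (hmeasa : ∀ k n, Measurable (a k n)) (hmeasb : ∀ k n, Measurable (b k n))
    (hma : ∀ k, 1 ≤ k → ∀ n, 1 ≤ n →
      (∫ ω, a k n ω ∂P) = 0 ∧ (∫ ω, (a k n ω) ^ 2 ∂P) = 1)
    (hmb : ∀ k, 1 ≤ k → ∀ n, 1 ≤ n →
      (∫ ω, b k n ω ∂P) = 0 ∧ (∫ ω, (b k n ω) ^ 2 ∂P) = 1)
    (n : ℕ) (hn : 1 ≤ n) (s t : ℝ)
    (hs : s ∈ Set.Icc (0 : ℝ) (2 * π)) (ht : t ∈ Set.Icc (0 : ℝ) (2 * π)) :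
    (∫ p, |Sproc a b n p t - Sproc a b n p s| ^ 2 ∂(P.prod unif2pi)) ≤ |t - s| ^ 2 ∧
    (∫ p, |deriv (Sproc a b n p) t - deriv (Sproc a b n p) s| ^ 2 ∂(P.prod unif2pi))
      ≤ |t - s| ^ 2 := by
  have hn0 : (0:ℝ) < n := by exact_mod_cast hn
  have hsq : Real.sqrt n ^ 2 = (n:ℝ) := Real.sq_sqrt (le_of_lt hn0)
  have hsqpos : (0:ℝ) < Real.sqrt n := Real.sqrt_pos.mpr hn0
  have hts : |t - s| ^ 2 = (t - s)^2 := sq_abs _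
  -- integrability of squares
  have hIa : ∀ k ∈ Finset.Icc 1 n, Integrable (fun ω => (a k n ω)^2) P ∧
      (∫ ω, (a k n ω)^2 ∂P) = 1 := by
    intro k hk
    rw [Finset.mem_Icc] at hk
    have h := (hma k hk.1 n hn).2
    exact ⟨aux_integrable_of_integral_eq_one h, h⟩
  have hIb : ∀ k ∈ Finset.Icc 1 n, Integrable (fun ω => (b k n ω)^2) P ∧
      (∫ ω, (b k n ω)^2 ∂P) = 1 := by
    intro k hk
    rw [Finset.mem_Icc] at hk
    have h := (hmb k hk.1 n hn).2
    exact ⟨aux_integrable_of_integral_eq_one h, h⟩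
  constructor
  · -- part 1
    set c : ℕ → Ω → ℝ := fun k ω => a k n ω / Real.sqrt n with hc
    set d : ℕ → Ω → ℝ := fun k ω => b k n ω / Real.sqrt n with hd
    have key : (fun p : Ω × ℝ => |Sproc a b n p t - Sproc a b n p s| ^ 2)
        = fun p => (∑ k ∈ Finset.Icc 1 n,
          (c k p.1 * (Real.cos (k*p.2 + k*t/n) - Real.cos (k*p.2 + k*s/n))
            + d k p.1 * (Real.sin (k*p.2 + k*t/n) - Real.sin (k*p.2 + k*s/n))))^2 := by
      funext p
      rw [sq_abs]
      congr 1
      simp only [Sproc, hc, hd]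
      rw [← mul_sub, ← Finset.sum_sub_distrib, Finset.mul_sum]
      apply Finset.sum_congr rfl
      intro k _
      field_simp
      ring
    rw [key, hts]
    apply master P n hn s t c d
    · intro k; exact (hmeasa k n).div_const _
    · intro k; exact (hmeasb k n).div_const _
    · intro k hk
      have heq : (fun ω => (c k ω)^2) = fun ω => (a k n ω)^2 / n := by
        funext ω
        rw [hc, div_pow, hsq]
      constructor
      · rw [heq]; exact (hIa k hk).1.div_const _
      · rw [heq, integral_div, (hIa k hk).2]
    · intro k hk
      have heq : (fun ω => (d k ω)^2) = fun ω => (b k n ω)^2 / n := by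
        funext ω
        rw [hd, div_pow, hsq]
      constructor
      · rw [heq]; exact (hIb k hk).1.div_const _
      · rw [heq, integral_div, (hIb k hk).2]
  · -- part 2
    set c : ℕ → Ω → ℝ := fun k ω => (k:ℝ)/n * (b k n ω / Real.sqrt n) with hc
    set d : ℕ → Ω → ℝ := fun k ω => -((k:ℝ)/n * (a k n ω / Real.sqrt n)) with hd
    have key : (fun p : Ω × ℝ => |deriv (Sproc a b n p) t - deriv (Sproc a b n p) s| ^ 2)
        = fun p => (∑ k ∈ Finset.Icc 1 n,
          (c k p.1 * (Real.cos (k*p.2 + k*t/n) - Real.cos (k*p.2 + k*s/n))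
            + d k p.1 * (Real.sin (k*p.2 + k*t/n) - Real.sin (k*p.2 + k*s/n))))^2 := by
      funext p
      rw [sq_abs, (hasDeriv_Sproc a b n p t).deriv, (hasDeriv_Sproc a b n p s).deriv]
      congr 1
      rw [← mul_sub, ← Finset.sum_sub_distrib, Finset.mul_sum]
      apply Finset.sum_congr rfl
      intro k _
      simp only [hc, hd]
      field_simp
      ring
    rw [key, hts]
    apply master P n hn s t c d
    · intro k; exact ((hmeasb k n).div_const _).const_mul _
    · intro k; exact (((hmeasa k n).div_const _).const_mul _).neg
    · intro k hk
      rw [Finset.mem_Icc] at hk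
      have hkn : (k:ℝ) ≤ n := by exact_mod_cast hk.2
      have heq : (fun ω => (c k ω)^2) = fun ω => ((k:ℝ)/n)^2/n * (b k n ω)^2 := by
        funext ω
        rw [hc, mul_pow, div_pow, div_pow, hsq]
        ring
      constructor
      · rw [heq]; exact (hIb k (Finset.mem_Icc.mpr hk)).1.const_mul _
      · rw [heq, integral_const_mul, (hIb k (Finset.mem_Icc.mpr hk)).2, mul_one]
        have hr : ((k:ℝ)/n)^2 ≤ 1 := by
          rw [div_pow]
          rw [div_le_one (by positivity)]
          nlinarith [Nat.cast_nonneg (α := ℝ) k]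
        rw [div_le_div_iff₀ (by positivity) (by positivity)]
        nlinarith
    · intro k hk
      rw [Finset.mem_Icc] at hk
      have hkn : (k:ℝ) ≤ n := by exact_mod_cast hk.2
      have heq : (fun ω => (d k ω)^2) = fun ω => ((k:ℝ)/n)^2/n * (a k n ω)^2 := by
        funext ω
        rw [hd, neg_sq, mul_pow, div_pow, div_pow, hsq]
        ring
      constructor
      · rw [heq]; exact (hIa k (Finset.mem_Icc.mpr hk)).1.const_mul _
      · rw [heq, integral_const_mul, (hIa k (Finset.mem_Icc.mpr hk)).2, mul_one]
        have hr : ((k:ℝ)/n)^2 ≤ 1 := by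
          rw [div_pow]
          rw [div_le_one (by positivity)]
          nlinarith [Nat.cast_nonneg (α := ℝ) k]
        rw [div_le_div_iff₀ (by positivity) (by positivity)]
        nlinarith
end
end

section
/- Let ψ : [−π,π] → ℝ be integrable with ψ(x) ≥ κ_G for almost every x, where κ_G > 0, and define ρ(k) := (1/2π) ∫_{−π}^{π} e^{ikx} ψ(x) dx for k ≥ 0; assume Σ_{k≥1} ρ(k)² < ∞. For integers n ≥ 1 and m ≥ 0, let Σ be the n×n matrix with entries Σ_{ij} = ρ(|i−j|) and Σ̃ the n×n matrix with entries Σ̃_{ij} = ρ(|i−j|)·1_{|i−j|≤m}. Then Σ is invertible and Trace((Σ^{−1}Σ̃ − I)²) ≤ (2 n² / κ_G²) · Σ_{k=m+1}^{∞} ρ(k)². -/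
open MeasureTheory Real

noncomputable section


lemma exp_I_int_pi (a : ℤ) : Complex.exp (Complex.I * a * π) = (-1 : ℂ) ^ a := by
  have : Complex.I * a * π = a * (π * Complex.I) := by ring
  rw [this, Complex.exp_int_mul, Complex.exp_pi_mul_I]

lemma neg_one_zpow_inv (a : ℤ) : ((-1:ℂ)^a)⁻¹ = (-1:ℂ)^a := by
  refine inv_eq_of_mul_eq_one_right ?_
  rw [← zpow_add₀ (by norm_num : (-1:ℂ) ≠ 0), show a + a = 2 * a by ring, zpow_mul]
  norm_num

lemma orth (a : ℤ) : (∫ x in Set.Icc (-π) π, Complex.exp (Complex.I * a * x)) =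
    if a = 0 then (2 * π : ℂ) else 0 := by
  rw [integral_Icc_eq_integral_Ioc, ← intervalIntegral.integral_of_le (by linarith [pi_pos] : -π ≤ π)]
  by_cases h : a = 0
  · simp [h]; norm_num; ring
  · rw [if_neg h]
    have hc : (Complex.I * a : ℂ) ≠ 0 := by
      simp [Complex.I_ne_zero, Complex.ext_iff]
      exact_mod_cast h
    have key := integral_exp_mul_complex (a := -π) (b := π) hc
    simp_rw [mul_assoc] at key ⊢
    rw [key]
    have h1 : Complex.exp (Complex.I * ((a:ℂ) * π)) = (-1:ℂ)^a := by
      rw [show (Complex.I * ((a:ℂ) * π)) = Complex.I * a * π by ring]; exact exp_I_int_pi a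
    have h2 : Complex.exp (Complex.I * ((a:ℂ) * ((-π:ℝ):ℂ))) = (-1:ℂ)^a := by
      rw [show (Complex.I * ((a:ℂ) * ((-π:ℝ):ℂ))) = -(Complex.I * a * π) by push_cast; ring]
      rw [Complex.exp_neg, exp_I_int_pi a, neg_one_zpow_inv]
    rw [h1, h2]
    simp


lemma intg (ψ : ℝ → ℝ) (hint : IntegrableOn ψ (Set.Icc (-π) π)) (c : ℝ) :
    IntegrableOn (fun x : ℝ => Complex.exp (Complex.I * c * x) * (ψ x : ℂ)) (Set.Icc (-π) π) := by
  apply MeasureTheory.Integrable.bdd_mul (c := 1) (hint.ofReal)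
  · exact (Continuous.aestronglyMeasurable (by continuity))
  · refine Filter.Eventually.of_forall fun x => ?_
    rw [show Complex.I * c * (x:ℂ) = ((c * x : ℝ):ℂ) * Complex.I by push_cast; ring]
    rw [Complex.norm_exp_ofReal_mul_I]

lemma rho_nat (ψ : ℝ → ℝ) (ρ : ℕ → ℝ)
    (hρ : ∀ k : ℕ, ((ρ k : ℝ) : ℂ) =
      (1 / (2 * π)) * ∫ x in Set.Icc (-π) π, Complex.exp (Complex.I * k * x) * (ψ x : ℂ))
    (k : ℕ) :
    (∫ x in Set.Icc (-π) π, Complex.exp (Complex.I * k * x) * (ψ x : ℂ)) = 2 * π * ρ k := by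
  have h := hρ k
  have hpi : (2 * π : ℂ) ≠ 0 := by
    simp [Complex.ext_iff]
  field_simp at h
  rw [← h]; ring

lemma rho_int (ψ : ℝ → ℝ) (ρ : ℕ → ℝ)
    (hρ : ∀ k : ℕ, ((ρ k : ℝ) : ℂ) =
      (1 / (2 * π)) * ∫ x in Set.Icc (-π) π, Complex.exp (Complex.I * k * x) * (ψ x : ℂ))
    (a : ℤ) :
    (∫ x in Set.Icc (-π) π, Complex.exp (Complex.I * a * x) * (ψ x : ℂ)) = 2 * π * ρ a.natAbs := by
  rcases le_or_gt 0 a with ha | ha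
  · have : ((a.natAbs : ℕ) : ℂ) = (a : ℂ) := by
      rw [← Int.cast_natCast, Int.natAbs_of_nonneg ha]
    rw [← this] at *
    exact rho_nat ψ ρ hρ a.natAbs
  · have key := rho_nat ψ ρ hρ a.natAbs
    have hna : ((a.natAbs : ℕ) : ℂ) = -(a : ℂ) := by
      rw [← Int.cast_natCast, (by omega : (a.natAbs : ℤ) = -a)]; push_cast; ring
    have hpt : ∀ x : ℝ, Complex.exp (Complex.I * a * x) * (ψ x : ℂ) =
        (starRingEnd ℂ) (Complex.exp (Complex.I * a.natAbs * x) * (ψ x : ℂ)) := by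
      intro x
      rw [map_mul, ← Complex.exp_conj]
      simp only [map_mul, Complex.conj_I, Complex.conj_ofReal, hna, map_neg,
        map_intCast]
      ring_nf
    calc (∫ x in Set.Icc (-π) π, Complex.exp (Complex.I * a * x) * (ψ x : ℂ))
        = ∫ x in Set.Icc (-π) π,
            (starRingEnd ℂ) (Complex.exp (Complex.I * a.natAbs * x) * (ψ x : ℂ)) := by
          simp_rw [hpt]
      _ = (starRingEnd ℂ) (∫ x in Set.Icc (-π) π,
            Complex.exp (Complex.I * a.natAbs * x) * (ψ x : ℂ)) := integral_conj
      _ = 2 * π * ρ a.natAbs := by rw [key]; simp [Complex.ext_iff]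

lemma quad (ψ : ℝ → ℝ) (κG : ℝ) (hκ : 0 < κG)
    (hint : IntegrableOn ψ (Set.Icc (-π) π))
    (hlb : ∀ᵐ x ∂(volume.restrict (Set.Icc (-π) π)), κG ≤ ψ x)
    (ρ : ℕ → ℝ)
    (hρ : ∀ k : ℕ, ((ρ k : ℝ) : ℂ) =
      (1 / (2 * π)) * ∫ x in Set.Icc (-π) π, Complex.exp (Complex.I * k * x) * (ψ x : ℂ))
    (n : ℕ) (v : Fin n → ℝ) :
    κG * ∑ i, v i ^ 2 ≤ ∑ i, ∑ j, v i * v j * ρ (((i:ℤ) - j).natAbs) := by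
  set F : ℝ → ℂ := fun x => ∑ j : Fin n, (v j : ℂ) * Complex.exp (Complex.I * (j : ℕ) * x)
    with hF
  have hFcont : Continuous F := by
    apply continuous_finset_sum
    intro j _
    exact continuous_const.mul (Complex.continuous_exp.comp
      (continuous_const.mul Complex.continuous_ofReal))
  -- pointwise expansion
  have hFF : ∀ x : ℝ, ((Complex.normSq (F x) : ℝ) : ℂ) =
      ∑ i : Fin n, ∑ j : Fin n, ((v i * v j : ℝ) : ℂ) *
        Complex.exp (Complex.I * (((i:ℤ) - (j:ℤ)) : ℤ) * x) := by
    intro x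
    rw [← Complex.mul_conj, hF, map_sum, Finset.sum_mul_sum]
    refine Finset.sum_congr rfl fun i _ => Finset.sum_congr rfl fun j _ => ?_
    rw [map_mul, Complex.conj_ofReal, ← Complex.exp_conj]
    have harg : (starRingEnd ℂ) (Complex.I * ((j:ℕ):ℂ) * ((x:ℝ):ℂ)) =
        -(Complex.I * ((j:ℕ):ℂ) * ((x:ℝ):ℂ)) := by
      rw [map_mul, map_mul, Complex.conj_I, map_natCast, Complex.conj_ofReal]
      ring
    rw [harg, mul_mul_mul_comm, ← Complex.exp_add]
    push_cast
    congr 1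
    ring
  -- bound on F
  have hFbd : ∀ x : ℝ, Complex.normSq (F x) ≤ (∑ j : Fin n, |v j|) ^ 2 := by
    intro x
    have h1 : ‖F x‖ ≤ ∑ j : Fin n, |v j| := by
      refine (norm_sum_le _ _).trans ?_
      apply Finset.sum_le_sum
      intro j _
      rw [norm_mul]
      rw [show Complex.I * ((j:ℕ):ℂ) * (x:ℂ) = (((j:ℕ) * x : ℝ) : ℂ) * Complex.I by
        push_cast; ring]
      rw [Complex.norm_exp_ofReal_mul_I]
      simp
    calc Complex.normSq (F x) = ‖F x‖ ^ 2 := by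
          rw [Complex.sq_norm]
      _ ≤ (∑ j : Fin n, |v j|) ^ 2 := by
          apply pow_le_pow_left₀ (norm_nonneg _) h1
  have hIcc : ∀ a : ℤ, IntegrableOn
      (fun x : ℝ => Complex.exp (Complex.I * (a : ℂ) * x) * (ψ x : ℂ)) (Set.Icc (-π) π) := by
    intro a
    have := intg ψ hint (a : ℝ)
    simpa using this
  have hexpint : ∀ a : ℤ, IntegrableOn
      (fun x : ℝ => Complex.exp (Complex.I * (a : ℂ) * x)) (Set.Icc (-π) π) := by
    intro a
    apply Continuous.integrableOn_Icc
    exact Complex.continuous_exp.comp (continuous_const.mul Complex.continuous_ofReal)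
  have key1 : (∫ x in Set.Icc (-π) π, ((Complex.normSq (F x) : ℝ) : ℂ) * (ψ x : ℂ)) =
      ∑ i : Fin n, ∑ j : Fin n, ((v i * v j : ℝ) : ℂ) *
        (2 * π * ρ (((i:ℤ) - (j:ℤ)).natAbs)) := by
    have e1 : (∫ x in Set.Icc (-π) π, ((Complex.normSq (F x) : ℝ) : ℂ) * (ψ x : ℂ)) =
        ∫ x in Set.Icc (-π) π, ∑ i : Fin n, ∑ j : Fin n, ((v i * v j : ℝ) : ℂ) *
          (Complex.exp (Complex.I * (((i:ℤ) - (j:ℤ) : ℤ) : ℂ) * x) * (ψ x : ℂ)) := by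
      refine integral_congr_ae (Filter.Eventually.of_forall fun x => ?_)
      dsimp only
      rw [hFF x, Finset.sum_mul]
      refine Finset.sum_congr rfl fun i _ => ?_
      rw [Finset.sum_mul]
      refine Finset.sum_congr rfl fun j _ => ?_
      ring
    rw [e1, integral_finset_sum]
    · refine Finset.sum_congr rfl fun i _ => ?_
      rw [integral_finset_sum]
      · refine Finset.sum_congr rfl fun j _ => ?_
        rw [integral_const_mul, rho_int ψ ρ hρ]
      · exact fun j _ => (hIcc _).const_mul _
    · exact fun i _ => integrable_finset_sum _ fun j _ => (hIcc _).const_mul _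
  have key2 : (∫ x in Set.Icc (-π) π, ((Complex.normSq (F x) : ℝ) : ℂ)) =
      2 * π * ∑ i : Fin n, ((v i ^ 2 : ℝ) : ℂ) := by
    have e1 : (∫ x in Set.Icc (-π) π, ((Complex.normSq (F x) : ℝ) : ℂ)) =
        ∫ x in Set.Icc (-π) π, ∑ i : Fin n, ∑ j : Fin n, ((v i * v j : ℝ) : ℂ) *
          Complex.exp (Complex.I * (((i:ℤ) - (j:ℤ) : ℤ) : ℂ) * x) := by
      refine integral_congr_ae (Filter.Eventually.of_forall fun x => ?_)
      exact hFF x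
    rw [e1, integral_finset_sum _ (fun i _ => integrable_finset_sum _ fun j _ =>
        (hexpint _).const_mul _)]
    have e4 : ∀ i : Fin n, (∫ x in Set.Icc (-π) π, ∑ j : Fin n, ((v i * v j : ℝ) : ℂ) *
        Complex.exp (Complex.I * (((i:ℤ) - (j:ℤ) : ℤ) : ℂ) * x)) =
        ∑ j : Fin n, ∫ x in Set.Icc (-π) π, ((v i * v j : ℝ) : ℂ) *
        Complex.exp (Complex.I * (((i:ℤ) - (j:ℤ) : ℤ) : ℂ) * x) :=
      fun i => integral_finset_sum _ (fun j _ => (hexpint _).const_mul _)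
    rw [Finset.sum_congr rfl fun i _ => e4 i]
    have e2 : ∀ i : Fin n, (∑ j : Fin n, ∫ x in Set.Icc (-π) π,
          ((v i * v j : ℝ) : ℂ) * Complex.exp (Complex.I * (((i:ℤ) - (j:ℤ) : ℤ) : ℂ) * x)) =
          ((v i * v i : ℝ) : ℂ) * (2 * π) := by
        intro i
        have e3 : ∀ j : Fin n, (∫ x in Set.Icc (-π) π,
            ((v i * v j : ℝ) : ℂ) * Complex.exp (Complex.I * (((i:ℤ) - (j:ℤ) : ℤ) : ℂ) * x)) =
            if j = i then ((v i * v j : ℝ) : ℂ) * (2 * π) else 0 := by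
          intro j
          rw [integral_const_mul, orth]
          by_cases h : j = i
          · rw [if_pos h, if_pos (by subst h; ring)]
          · rw [if_neg h, if_neg (by
              intro hc
              apply h
              have : (i : ℤ) = (j : ℤ) := by omega
              exact (Fin.ext (by exact_mod_cast this)).symm), mul_zero]
        rw [Finset.sum_congr rfl fun j _ => e3 j]
        rw [Finset.sum_ite_eq' Finset.univ i (fun j => ((v i * v j : ℝ) : ℂ) * (2 * π))]
        simp
    rw [Finset.sum_congr rfl fun i _ => e2 i]
    rw [← Finset.sum_mul]
    push_cast
    ring
  -- real versions
  have rkey1 : (∫ x in Set.Icc (-π) π, Complex.normSq (F x) * ψ x) =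
      ∑ i : Fin n, ∑ j : Fin n, v i * v j * (2 * π * ρ (((i:ℤ) - (j:ℤ)).natAbs)) := by
    have := key1
    have base : (∫ x in Set.Icc (-π) π, ((Complex.normSq (F x) * ψ x : ℝ) : ℂ)) =
        ((∫ x in Set.Icc (-π) π, Complex.normSq (F x) * ψ x : ℝ) : ℂ) := integral_ofReal
    have e : (∫ x in Set.Icc (-π) π, ((Complex.normSq (F x) : ℝ) : ℂ) * (ψ x : ℂ)) =
        ∫ x in Set.Icc (-π) π, ((Complex.normSq (F x) * ψ x : ℝ) : ℂ) :=
      integral_congr_ae (Filter.Eventually.of_forall fun x => by dsimp only; push_cast; ring)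
    rw [e, base] at this
    have h2 : ((∑ i : Fin n, ∑ j : Fin n, v i * v j *
        (2 * π * ρ (((i:ℤ) - (j:ℤ)).natAbs)) : ℝ) : ℂ) =
        ∑ i : Fin n, ∑ j : Fin n, ((v i * v j : ℝ) : ℂ) *
        (2 * π * ρ (((i:ℤ) - (j:ℤ)).natAbs)) := by
      push_cast
      ring
    exact_mod_cast this.trans h2.symm
  have rkey2 : (∫ x in Set.Icc (-π) π, Complex.normSq (F x)) =
      2 * π * ∑ i : Fin n, v i ^ 2 := by
    have := key2
    have base : (∫ x in Set.Icc (-π) π, ((Complex.normSq (F x) : ℝ) : ℂ)) =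
        ((∫ x in Set.Icc (-π) π, Complex.normSq (F x) : ℝ) : ℂ) := integral_ofReal
    rw [base] at this
    have h2 : ((2 * π * ∑ i : Fin n, v i ^ 2 : ℝ) : ℂ) =
        2 * π * ∑ i : Fin n, ((v i ^ 2 : ℝ) : ℂ) := by push_cast; ring
    exact_mod_cast this.trans h2.symm
  -- integrability for monotonicity
  have hint1 : IntegrableOn (fun x => Complex.normSq (F x) * ψ x) (Set.Icc (-π) π) := by
    apply MeasureTheory.Integrable.bdd_mul (c := (∑ j : Fin n, |v j|) ^ 2) hint
    · exact ((Complex.continuous_normSq.comp hFcont).aestronglyMeasurable)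
    · refine Filter.Eventually.of_forall fun x => ?_
      rw [Real.norm_eq_abs, abs_of_nonneg (Complex.normSq_nonneg _)]
      exact hFbd x
  have hint2 : IntegrableOn (fun x => κG * Complex.normSq (F x)) (Set.Icc (-π) π) :=
    (Continuous.integrableOn_Icc (continuous_const.mul
      (Complex.continuous_normSq.comp hFcont)))
  have hmono : (∫ x in Set.Icc (-π) π, κG * Complex.normSq (F x)) ≤
      ∫ x in Set.Icc (-π) π, Complex.normSq (F x) * ψ x := by
    refine integral_mono_ae hint2 hint1 ?_
    filter_upwards [hlb] with x hx
    rw [mul_comm]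
    exact mul_le_mul_of_nonneg_left hx (Complex.normSq_nonneg _)
  rw [integral_const_mul, rkey2, rkey1] at hmono
  have hfinal : 2 * π * (κG * ∑ i, v i ^ 2) ≤
      2 * π * (∑ i, ∑ j, v i * v j * ρ (((i:ℤ) - (j:ℤ)).natAbs)) := by
    calc 2 * π * (κG * ∑ i, v i ^ 2) = κG * (2 * π * ∑ i, v i ^ 2) := by ring
      _ ≤ ∑ i, ∑ j, v i * v j * (2 * π * ρ (((i:ℤ) - (j:ℤ)).natAbs)) := hmono
      _ = 2 * π * (∑ i, ∑ j, v i * v j * ρ (((i:ℤ) - (j:ℤ)).natAbs)) := by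
          rw [Finset.mul_sum]
          refine Finset.sum_congr rfl fun i _ => ?_
          rw [Finset.mul_sum]
          refine Finset.sum_congr rfl fun j _ => ?_
          ring
  have hpi : (0:ℝ) < 2 * π := by linarith [pi_pos]
  exact le_of_mul_le_mul_left hfinal hpi

theorem statement15 (ψ : ℝ → ℝ) (κG : ℝ) (hκ : 0 < κG)
    (hint : MeasureTheory.IntegrableOn ψ (Set.Icc (-π) π))
    (hlb : ∀ᵐ x ∂(volume.restrict (Set.Icc (-π) π)), κG ≤ ψ x)
    (ρ : ℕ → ℝ)
    (hρ : ∀ k : ℕ, ((ρ k : ℝ) : ℂ) =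
      (1 / (2 * π)) * ∫ x in Set.Icc (-π) π, Complex.exp (Complex.I * k * x) * (ψ x : ℂ))
    (hsum : Summable fun k : ℕ => (ρ (k + 1)) ^ 2)
    (n m : ℕ) (hn : 1 ≤ n)
    (S St : Matrix (Fin n) (Fin n) ℝ)
    (hS : ∀ i j : Fin n, S i j = ρ ((i : ℤ) - j).natAbs)
    (hSt : ∀ i j : Fin n, St i j =
      if ((i : ℤ) - j).natAbs ≤ m then ρ ((i : ℤ) - j).natAbs else 0) :
    IsUnit S ∧
    Matrix.trace ((S⁻¹ * St - 1) ^ 2) ≤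
      2 * (n : ℝ) ^ 2 / κG ^ 2 * ∑' k : ℕ, (ρ (m + 1 + k)) ^ 2 := by
  -- quadratic form bound
  have hquad : ∀ v : Fin n → ℝ, κG * ∑ i, v i ^ 2 ≤ ∑ i, v i * S.mulVec v i := by
    intro v
    have := quad ψ κG hκ hint hlb ρ hρ n v
    refine this.trans_eq (Finset.sum_congr rfl fun i _ => ?_)
    rw [Matrix.mulVec, dotProduct, Finset.mul_sum]
    exact Finset.sum_congr rfl fun j _ => by rw [hS i j]; ring
  -- squared operator bound
  have hsq : ∀ v : Fin n → ℝ, κG ^ 2 * ∑ i, v i ^ 2 ≤ ∑ i, (S.mulVec v i) ^ 2 := by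
    intro v
    rcases eq_or_ne (∑ i, v i ^ 2) 0 with h0 | h0
    · rw [h0, mul_zero]
      exact Finset.sum_nonneg fun i _ => sq_nonneg _
    · have hvpos : 0 < ∑ i, v i ^ 2 :=
        lt_of_le_of_ne (Finset.sum_nonneg fun i _ => sq_nonneg _) (Ne.symm h0)
      have h1 := hquad v
      have h2 := Finset.sum_mul_sq_le_sq_mul_sq Finset.univ v (S.mulVec v)
      have h3 : (κG * ∑ i, v i ^ 2) ^ 2 ≤ (∑ i, v i ^ 2) * ∑ i, (S.mulVec v i) ^ 2 := by
        refine le_trans ?_ h2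
        have hnn : 0 ≤ κG * ∑ i, v i ^ 2 := by positivity
        exact pow_le_pow_left₀ hnn h1 2
      have h4 : κG ^ 2 * (∑ i, v i ^ 2) * (∑ i, v i ^ 2) ≤
          (∑ i, (S.mulVec v i) ^ 2) * (∑ i, v i ^ 2) := by
        calc κG ^ 2 * (∑ i, v i ^ 2) * (∑ i, v i ^ 2) = (κG * ∑ i, v i ^ 2) ^ 2 := by ring
          _ ≤ (∑ i, v i ^ 2) * ∑ i, (S.mulVec v i) ^ 2 := h3
          _ = (∑ i, (S.mulVec v i) ^ 2) * (∑ i, v i ^ 2) := by ring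
      have := le_of_mul_le_mul_right h4 hvpos
      linarith
  -- injectivity and invertibility
  have hinj : Function.Injective S.mulVec := by
    intro a b hab
    have hz : S.mulVec (a - b) = 0 := by rw [Matrix.mulVec_sub, hab, sub_self]
    have h1 := hsq (a - b)
    rw [hz] at h1
    simp only [Pi.zero_apply, ne_eq, OfNat.ofNat_ne_zero, not_false_eq_true, zero_pow,
      Finset.sum_const_zero] at h1
    have h2 : ∑ i, (a - b) i ^ 2 ≤ 0 := by nlinarith [pow_pos hκ 2]
    have h3 : ∑ i, (a - b) i ^ 2 = 0 :=
      le_antisymm h2 (Finset.sum_nonneg fun i _ => sq_nonneg _)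
    have h4 : ∀ i ∈ Finset.univ, (a - b) i ^ 2 = 0 :=
      (Finset.sum_eq_zero_iff_of_nonneg fun i _ => sq_nonneg _).mp h3
    funext i
    have := h4 i (Finset.mem_univ i)
    have : (a - b) i = 0 := by nlinarith
    simpa [sub_eq_zero] using this
  have hunit : IsUnit S := Matrix.mulVec_injective_iff_isUnit.mp hinj
  refine ⟨hunit, ?_⟩
  have hdet : IsUnit S.det := (Matrix.isUnit_iff_isUnit_det S).mp hunit
  -- inverse bound
  have hinvb : ∀ w : Fin n → ℝ, κG ^ 2 * ∑ i, (S⁻¹.mulVec w i) ^ 2 ≤ ∑ i, w i ^ 2 := by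
    intro w
    have h1 := hsq (S⁻¹.mulVec w)
    rwa [Matrix.mulVec_mulVec, Matrix.mul_nonsing_inv S hdet, Matrix.one_mulVec] at h1
  set E : Matrix (Fin n) (Fin n) ℝ := St - S with hE
  have hA : S⁻¹ * St - 1 = S⁻¹ * E := by
    rw [hE, Matrix.mul_sub, Matrix.nonsing_inv_mul S hdet]
  set A : Matrix (Fin n) (Fin n) ℝ := S⁻¹ * E with hAdef
  rw [hA]
  -- trace bound
  have htr : Matrix.trace (A ^ 2) = ∑ i, ∑ j, A i j * A j i := by
    rw [pow_two]
    simp [Matrix.trace, Matrix.diag, Matrix.mul_apply]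
  have htr2 : Matrix.trace (A ^ 2) ≤ ∑ i, ∑ j, (A i j) ^ 2 := by
    have hcomm : ∑ i, ∑ j, (A j i) ^ 2 = ∑ i, ∑ j, (A i j) ^ 2 := Finset.sum_comm
    have h1 : ∑ i, ∑ j, (2 * (A i j * A j i)) ≤ ∑ i, ∑ j, ((A i j) ^ 2 + (A j i) ^ 2) :=
      Finset.sum_le_sum fun i _ => Finset.sum_le_sum fun j _ => by
        nlinarith [sq_nonneg (A i j - A j i)]
    simp_rw [Finset.sum_add_distrib, ← Finset.mul_sum] at h1
    rw [hcomm] at h1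
    rw [htr]
    linarith
  -- entries of A via mulVec
  have hAE : ∀ i j : Fin n, A i j = S⁻¹.mulVec (fun k => E k j) i := by
    intro i j
    rw [hAdef, Matrix.mul_apply, Matrix.mulVec, dotProduct]
  have hfrob : κG ^ 2 * ∑ i, ∑ j, (A i j) ^ 2 ≤ ∑ j, ∑ k, (E k j) ^ 2 := by
    rw [show (∑ i, ∑ j, (A i j) ^ 2) = ∑ j, ∑ i, (A i j) ^ 2 from Finset.sum_comm]
    rw [Finset.mul_sum]
    refine Finset.sum_le_sum fun j _ => ?_
    calc κG ^ 2 * ∑ i, (A i j) ^ 2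
        = κG ^ 2 * ∑ i, (S⁻¹.mulVec (fun k => E k j) i) ^ 2 := by
          rw [Finset.sum_congr rfl fun i _ => by rw [hAE i j]]
      _ ≤ ∑ k, (E k j) ^ 2 := hinvb _
  -- entries of E
  have hE2 : ∀ k j : Fin n, (E k j) ^ 2 =
      if ((k:ℤ) - (j:ℤ)).natAbs ≤ m then 0 else ρ (((k:ℤ) - (j:ℤ)).natAbs) ^ 2 := by
    intro k j
    have h0 : E k j = St k j - S k j := by rw [hE]; rfl
    rw [h0, hSt, hS]
    split_ifs with h
    · simp
    · ring
  -- summability of the tail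
  have hTsum : Summable (fun t : ℕ => ρ (m + 1 + t) ^ 2) := by
    have h1 : Summable (fun k : ℕ => ρ (k + m + 1) ^ 2) :=
      (summable_nat_add_iff (f := fun k : ℕ => ρ (k + 1) ^ 2) m).mpr hsum
    refine h1.congr fun k => ?_
    rw [show k + m + 1 = m + 1 + k from by omega]
  have hT0 : 0 ≤ ∑' t : ℕ, ρ (m + 1 + t) ^ 2 := tsum_nonneg fun _ => sq_nonneg _
  -- combinatorial bound per column
  have hcomb : ∀ j : Fin n, ∑ k : Fin n, (E k j) ^ 2 ≤ 2 * ∑' t : ℕ, ρ (m + 1 + t) ^ 2 := by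
    intro j
    set g : ℕ → ℝ := fun t => ρ (m + 1 + t) ^ 2 with hg
    have hsplit : ∑ k : Fin n, (E k j) ^ 2 =
        ∑ k ∈ Finset.univ.filter (fun k : Fin n => ¬ ((k:ℤ) - (j:ℤ)).natAbs ≤ m),
          ρ (((k:ℤ) - (j:ℤ)).natAbs) ^ 2 := by
      rw [Finset.sum_filter]
      refine Finset.sum_congr rfl fun k _ => ?_
      rw [hE2 k j]
      by_cases h : ((k:ℤ) - (j:ℤ)).natAbs ≤ m <;> simp [h]
    rw [hsplit]
    set t := Finset.univ.filter (fun k : Fin n => ¬ ((k:ℤ) - (j:ℤ)).natAbs ≤ m) with ht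
    have hmem : ∀ k ∈ t, m < ((k:ℤ) - (j:ℤ)).natAbs := by
      intro k hk
      rw [ht, Finset.mem_filter] at hk
      omega
    rw [← Finset.sum_filter_add_sum_filter_not t (fun k : Fin n => (k:ℕ) < (j:ℕ))
      (fun k => ρ (((k:ℤ) - (j:ℤ)).natAbs) ^ 2)]
    have hb1 : ∑ k ∈ t.filter (fun k : Fin n => (k:ℕ) < (j:ℕ)),
        ρ (((k:ℤ) - (j:ℤ)).natAbs) ^ 2 ≤ ∑' u : ℕ, g u := by
      set φ : Fin n → ℕ := fun k => (j:ℕ) - (k:ℕ) - (m + 1) with hφ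
      have hval : ∀ k ∈ t.filter (fun k : Fin n => (k:ℕ) < (j:ℕ)),
          ρ (((k:ℤ) - (j:ℤ)).natAbs) ^ 2 = g (φ k) := by
        intro k hk
        rw [Finset.mem_filter] at hk
        have h2 := hmem k hk.1
        have h1 : (k:ℕ) < (j:ℕ) := hk.2
        rw [hg, hφ]
        have : ((k:ℤ) - (j:ℤ)).natAbs = m + 1 + ((j:ℕ) - (k:ℕ) - (m + 1)) := by omega
        rw [this]
      have hinj : ∀ x ∈ t.filter (fun k : Fin n => (k:ℕ) < (j:ℕ)),
          ∀ y ∈ t.filter (fun k : Fin n => (k:ℕ) < (j:ℕ)), φ x = φ y → x = y := by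
        intro x hx y hy hxy
        rw [Finset.mem_filter] at hx hy
        have hx2 := hmem x hx.1
        have hy2 := hmem y hy.1
        have hx1 : (x:ℕ) < (j:ℕ) := hx.2
        have hy1 : (y:ℕ) < (j:ℕ) := hy.2
        simp only [hφ] at hxy
        have : (x:ℕ) = (y:ℕ) := by omega
        exact Fin.ext this
      calc ∑ k ∈ t.filter (fun k : Fin n => (k:ℕ) < (j:ℕ)),
            ρ (((k:ℤ) - (j:ℤ)).natAbs) ^ 2
          = ∑ k ∈ t.filter (fun k : Fin n => (k:ℕ) < (j:ℕ)), g (φ k) :=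
            Finset.sum_congr rfl hval
        _ = ∑ u ∈ (t.filter (fun k : Fin n => (k:ℕ) < (j:ℕ))).image φ, g u :=
            (Finset.sum_image hinj).symm
        _ ≤ ∑' u : ℕ, g u := Summable.sum_le_tsum _ (fun _ _ => sq_nonneg _) hTsum
    have hb2 : ∑ k ∈ t.filter (fun k : Fin n => ¬ (k:ℕ) < (j:ℕ)),
        ρ (((k:ℤ) - (j:ℤ)).natAbs) ^ 2 ≤ ∑' u : ℕ, g u := by
      set φ : Fin n → ℕ := fun k => (k:ℕ) - (j:ℕ) - (m + 1) with hφ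
      have hval : ∀ k ∈ t.filter (fun k : Fin n => ¬ (k:ℕ) < (j:ℕ)),
          ρ (((k:ℤ) - (j:ℤ)).natAbs) ^ 2 = g (φ k) := by
        intro k hk
        rw [Finset.mem_filter] at hk
        have h2 := hmem k hk.1
        have h1 : ¬ (k:ℕ) < (j:ℕ) := hk.2
        rw [hg, hφ]
        have : ((k:ℤ) - (j:ℤ)).natAbs = m + 1 + ((k:ℕ) - (j:ℕ) - (m + 1)) := by omega
        rw [this]
      have hinj : ∀ x ∈ t.filter (fun k : Fin n => ¬ (k:ℕ) < (j:ℕ)),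
          ∀ y ∈ t.filter (fun k : Fin n => ¬ (k:ℕ) < (j:ℕ)), φ x = φ y → x = y := by
        intro x hx y hy hxy
        rw [Finset.mem_filter] at hx hy
        have hx2 := hmem x hx.1
        have hy2 := hmem y hy.1
        have hx1 : ¬ (x:ℕ) < (j:ℕ) := hx.2
        have hy1 : ¬ (y:ℕ) < (j:ℕ) := hy.2
        simp only [hφ] at hxy
        have : (x:ℕ) = (y:ℕ) := by omega
        exact Fin.ext this
      calc ∑ k ∈ t.filter (fun k : Fin n => ¬ (k:ℕ) < (j:ℕ)),
            ρ (((k:ℤ) - (j:ℤ)).natAbs) ^ 2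
          = ∑ k ∈ t.filter (fun k : Fin n => ¬ (k:ℕ) < (j:ℕ)), g (φ k) :=
            Finset.sum_congr rfl hval
        _ = ∑ u ∈ (t.filter (fun k : Fin n => ¬ (k:ℕ) < (j:ℕ))).image φ, g u :=
            (Finset.sum_image hinj).symm
        _ ≤ ∑' u : ℕ, g u := Summable.sum_le_tsum _ (fun _ _ => sq_nonneg _) hTsum
    calc ∑ k ∈ t.filter (fun k : Fin n => (k:ℕ) < (j:ℕ)),
          ρ (((k:ℤ) - (j:ℤ)).natAbs) ^ 2 +
        ∑ k ∈ t.filter (fun k : Fin n => ¬ (k:ℕ) < (j:ℕ)),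
          ρ (((k:ℤ) - (j:ℤ)).natAbs) ^ 2
        ≤ (∑' u : ℕ, g u) + ∑' u : ℕ, g u := add_le_add hb1 hb2
      _ = 2 * ∑' u : ℕ, g u := by ring
  have hEtot : ∑ j, ∑ k, (E k j) ^ 2 ≤ 2 * n * ∑' t : ℕ, ρ (m + 1 + t) ^ 2 := by
    calc ∑ j, ∑ k : Fin n, (E k j) ^ 2
        ≤ ∑ _j : Fin n, 2 * ∑' t : ℕ, ρ (m + 1 + t) ^ 2 :=
          Finset.sum_le_sum fun j _ => hcomb j
      _ = n * (2 * ∑' t : ℕ, ρ (m + 1 + t) ^ 2) := by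
          rw [Finset.sum_const, Finset.card_univ, Fintype.card_fin, nsmul_eq_mul]
      _ = 2 * n * ∑' t : ℕ, ρ (m + 1 + t) ^ 2 := by ring
  have hκ2 : (0:ℝ) < κG ^ 2 := pow_pos hκ 2
  rw [div_mul_eq_mul_div, le_div_iff₀ hκ2]
  have hn' : (1:ℝ) ≤ (n:ℝ) := by exact_mod_cast hn
  calc Matrix.trace (A ^ 2) * κG ^ 2 = κG ^ 2 * Matrix.trace (A ^ 2) := by ring
    _ ≤ κG ^ 2 * ∑ i, ∑ j, (A i j) ^ 2 := mul_le_mul_of_nonneg_left htr2 hκ2.le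
    _ ≤ ∑ j, ∑ k, (E k j) ^ 2 := hfrob
    _ ≤ 2 * n * ∑' t : ℕ, ρ (m + 1 + t) ^ 2 := hEtot
    _ ≤ 2 * (n:ℝ) ^ 2 * ∑' t : ℕ, ρ (m + 1 + t) ^ 2 := by
        have hnn : (n:ℝ) ≤ (n:ℝ) ^ 2 := by nlinarith
        have h := mul_le_mul_of_nonneg_right
          (by linarith : 2 * (n:ℝ) ≤ 2 * (n:ℝ) ^ 2) hT0
        linarith
end
end

section
/- For every x ∈ ℝ, the identity Σ_{k∈ℤ} e^{−k²/2} e^{ikx} = √(2π) · Σ_{k∈ℤ} e^{−(x+2πk)²/2} holds (both series converge absolutely, and the left-hand side equals 1 + 2 Σ_{k≥1} e^{−k²/2} cos(kx)). In particular, for every x ∈ [−π,π], Σ_{k∈ℤ} e^{−k²/2} e^{ikx} ≥ √(2π) · e^{−π²/2}. -/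
open Real

noncomputable section

theorem statement17 (x : ℝ) :
    Summable (fun k : ℤ =>
      ‖((Real.exp (-(k : ℝ) ^ 2 / 2) : ℝ) : ℂ) * Complex.exp (Complex.I * k * x)‖) ∧
    Summable (fun k : ℤ => Real.exp (-(x + 2 * π * k) ^ 2 / 2)) ∧
    (∑' k : ℤ, ((Real.exp (-(k : ℝ) ^ 2 / 2) : ℝ) : ℂ) * Complex.exp (Complex.I * k * x))
      = ((Real.sqrt (2 * π) * ∑' k : ℤ, Real.exp (-(x + 2 * π * k) ^ 2 / 2) : ℝ) : ℂ) ∧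
    (∑' k : ℤ, ((Real.exp (-(k : ℝ) ^ 2 / 2) : ℝ) : ℂ) * Complex.exp (Complex.I * k * x))
      = ((1 + 2 * ∑' k : ℕ, Real.exp (-((k : ℝ) + 1) ^ 2 / 2) * Real.cos (((k : ℝ) + 1) * x)
          : ℝ) : ℂ) ∧
    (x ∈ Set.Icc (-π) π →
      Real.sqrt (2 * π) * Real.exp (-π ^ 2 / 2) ≤
        (∑' k : ℤ, ((Real.exp (-(k : ℝ) ^ 2 / 2) : ℝ) : ℂ) *
          Complex.exp (Complex.I * k * x)).re) := by
  have hπ : (0:ℝ) < π := pi_pos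
  have hπc : (π:ℂ) ≠ 0 := Complex.ofReal_ne_zero.mpr pi_ne_zero
  set f : ℤ → ℂ := fun k => ((Real.exp (-(k : ℝ) ^ 2 / 2) : ℝ) : ℂ) *
      Complex.exp (Complex.I * k * x) with hf_def
  have hnorm : ∀ k : ℤ, ‖f k‖ = Real.exp (-(k:ℝ) ^ 2 / 2) := by
    intro k
    simp only [hf_def]
    rw [norm_mul, Complex.norm_real, Real.norm_eq_abs,
      abs_of_pos (Real.exp_pos _),
      show Complex.I * (k:ℂ) * (x:ℂ) = (((k:ℝ) * x : ℝ) : ℂ) * Complex.I by push_cast; ring,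
      Complex.norm_exp_ofReal_mul_I, mul_one]
  have hS1 : Summable (fun k : ℤ => Real.exp (-(k:ℝ) ^ 2 / 2)) := by
    have hb := summable_pow_mul_jacobiTheta₂_term_bound 0 (by positivity : (0:ℝ) < 1/(2*π)) 0
    simp only [pow_zero, one_mul] at hb
    convert hb using 2 with k
    field_simp
    ring
  have h1 : Summable (fun k : ℤ => ‖f k‖) := by
    simpa only [hnorm] using hS1
  have h2 : Summable (fun k : ℤ => Real.exp (-(x + 2 * π * k) ^ 2 / 2)) := by
    have hb := summable_pow_mul_jacobiTheta₂_term_bound |x| (by positivity : (0:ℝ) < 2*π) 0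
    simp only [pow_zero, one_mul] at hb
    refine hb.of_nonneg_of_le (fun k => (Real.exp_pos _).le) (fun k => ?_)
    rw [Real.exp_le_exp]
    push_cast [Int.cast_abs]
    have h1' : -(x * (k:ℝ)) ≤ |x| * |(k:ℝ)| := by rw [← abs_mul]; exact neg_le_abs _
    nlinarith [pi_pos, sq_abs ((k:ℝ)), sq_nonneg x]
  -- Poisson summation
  have h3 : (∑' k : ℤ, f k)
      = ((Real.sqrt (2 * π) * ∑' k : ℤ, Real.exp (-(x + 2 * π * k) ^ 2 / 2) : ℝ) : ℂ) := by
    set a : ℂ := ((1/(2*π) : ℝ) : ℂ) with ha_def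
    have ha : 0 < a.re := by
      rw [ha_def, Complex.ofReal_re]; positivity
    have h := Complex.tsum_exp_neg_quadratic ha (Complex.I * x / (2*π))
    have hL : ∀ n : ℤ, Complex.exp (-↑π * a * n ^ 2 + 2 * ↑π * (Complex.I * x / (2*π)) * n)
        = f n := by
      intro n
      simp only [hf_def]
      rw [Complex.exp_add, Complex.ofReal_exp]
      push_cast [ha_def]
      congr 2
      · field_simp
      · field_simp
    have hR : ∀ n : ℤ, Complex.exp (-↑π / a * (n + Complex.I * (Complex.I * x / (2*π))) ^ 2)
        = ((Real.exp (-(x + 2 * π * ((-n : ℤ) : ℝ)) ^ 2 / 2) : ℝ) : ℂ) := by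
      intro n
      rw [Complex.ofReal_exp]
      congr 1
      push_cast [ha_def]
      have h1' : Complex.I * (Complex.I * (x:ℂ) / (2 * ↑π)) = -(↑x / (2*↑π)) := by
        rw [mul_div_assoc', ← mul_assoc, Complex.I_mul_I]; ring
      rw [h1']
      field_simp
      ring
    have hsqrt : (1:ℂ) / a ^ ((1:ℂ)/2) = ((Real.sqrt (2 * π) : ℝ) : ℂ) := by
      rw [ha_def, show ((1:ℂ)/2) = (((1:ℝ)/2 : ℝ) : ℂ) by push_cast; ring,
        ← Complex.ofReal_cpow (by positivity), ← Complex.ofReal_one, ← Complex.ofReal_div]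
      congr 1
      rw [← Real.sqrt_eq_rpow, show (1:ℝ)/(2*π) = (2*π)⁻¹ from one_div _,
        Real.sqrt_inv, one_div, inv_inv]
    rw [tsum_congr hL, tsum_congr hR, hsqrt] at h
    rw [h, ← Complex.ofReal_tsum, ← Complex.ofReal_mul]
    congr 2
    exact (Equiv.neg ℤ).tsum_eq
      (fun k => Real.exp (-(x + 2 * π * (k : ℝ)) ^ 2 / 2))
  -- cosine form
  have hsZ : Summable f := h1.of_norm
  have hnat : Summable (fun n : ℕ => f n) :=
    hsZ.comp_injective (fun m n h => by exact_mod_cast h)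
  have hneg : Summable (fun n : ℕ => f (-(n + 1))) :=
    hsZ.comp_injective (fun m n h => by omega)
  have hnat1 : Summable (fun n : ℕ => f ((n : ℕ) + 1 : ℕ)) :=
    hsZ.comp_injective (fun m n h => by omega)
  have key : ∀ n : ℕ, f ((n : ℕ) + 1 : ℕ) + f (-((n : ℕ) + 1))
      = ((2 * (Real.exp (-((n : ℝ) + 1) ^ 2 / 2) * Real.cos (((n : ℝ) + 1) * x)) : ℝ) : ℂ) := by
    intro n
    simp only [hf_def]
    push_cast [neg_sq]
    rw [Complex.cos]
    ring_nf
  have h4 : (∑' k : ℤ, f k)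
      = ((1 + 2 * ∑' k : ℕ, Real.exp (-((k : ℝ) + 1) ^ 2 / 2) * Real.cos (((k : ℝ) + 1) * x)
          : ℝ) : ℂ) := by
    rw [tsum_of_nat_of_neg_add_one hnat hneg, hnat.tsum_eq_zero_add, add_assoc,
      ← Summable.tsum_add hnat1 hneg, tsum_congr key, ← Complex.ofReal_tsum, tsum_mul_left]
    have h0 : f ((0:ℕ) : ℤ) = 1 := by
      simp [hf_def]
    rw [h0]
    push_cast
    ring
  refine ⟨h1, h2, h3, h4, fun hx => ?_⟩
  rw [h3, Complex.ofReal_re]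
  have hx2 : x^2 ≤ π^2 := by
    rcases hx with ⟨hl, hr⟩
    nlinarith
  have h0 : Real.exp (-π ^ 2 / 2) ≤ Real.exp (-(x + 2 * π * ((0:ℤ):ℝ)) ^ 2 / 2) := by
    rw [Real.exp_le_exp]
    push_cast
    nlinarith
  have hle := Summable.le_tsum h2 0 (fun j _ => (Real.exp_pos _).le)
  have hs : (0:ℝ) ≤ Real.sqrt (2*π) := Real.sqrt_nonneg _
  nlinarith [h0.trans hle, hs]
end
end
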